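/- arXiv:1408.6443 — 9 statements merged into one kernel-verified Lean document; each statement's English description precedes it below -/
import Mathlib

section
/- For any vector x ∈ ℂⁿ with ‖x‖ = 1 and any n×n diagonal matrix D with positive real diagonal entries, there exists a step-vector y ∈ ℂⁿ such that ‖x − Dy‖ ≤ 1/3, ‖Dy‖ ≤ 1, and every nonzero entry of y is of the form (4/5)^j · e^{(ℓ/29)·2πi} for some integer j and some integer ℓ with 0 ≤ ℓ ≤ 28. -/
/-!
Each coordinate can be approximated separately, with relative error `1/3`. Write
`x_i = r e^{iθ}`. Choosing the power `j` with `(4/5)^j d_i ∈ (4r/5, r]` costs at most `r/5` in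
modulus, and rounding `θ` to the nearest multiple of `2π/29` costs at most `r · π/29` more; since
`1/5 + π/29 < 1/3`, the coordinatewise bounds `|x_i - d_i y_i| ≤ |x_i|/3` and `|d_i y_i| ≤ |x_i|`
add up in `ℓ²`.
-/

open scoped BigOperators

namespace Stmt1

noncomputable def enormC {N : ℕ} (v : Fin N → ℂ) : ℝ :=
  Real.sqrt (∑ i, ‖v i‖ ^ 2)

open Complex Real

lemma enormC_le_mul_of_norm_le {N : ℕ} {u v : Fin N → ℂ} {c : ℝ} (hc : 0 ≤ c)
    (h : ∀ i, ‖u i‖ ≤ c * ‖v i‖) : enormC u ≤ c * enormC v := by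
  rw [enormC, enormC, ← Real.sqrt_sq hc, ← Real.sqrt_mul (sq_nonneg c), Finset.mul_sum]
  gcongr with i
  rw [← mul_pow]
  exact pow_le_pow_left₀ (norm_nonneg _) (h i) 2

lemma norm_exp_mul_I_sub_exp_mul_I_le (a b : ℝ) :
    ‖exp (a * I) - exp (b * I)‖ ≤ |a - b| := by
  have h : exp (a * I) - exp (b * I) = exp (b * I) * (exp (I * (a - b : ℝ)) - 1) := by
    rw [mul_sub, mul_one, ← Complex.exp_add]
    push_cast
    ring_nf
  rw [h, norm_mul, norm_exp_ofReal_mul_I, one_mul, ← Real.norm_eq_abs]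
  exact Real.norm_exp_I_mul_ofReal_sub_one_le

lemma exists_norm_exp_mul_I_sub_exp_le (N : ℕ) (hN : 0 < N) (θ : ℝ) :
    ∃ l : ℕ, l < N ∧ ‖exp (θ * I) - exp ((l : ℂ) / N * (2 * π * I))‖ ≤ π / N := by
  set m : ℤ := round (θ * N / (2 * π))
  have hN' : (0 : ℤ) < N := by exact_mod_cast hN
  refine ⟨(m % N).toNat, by have := Int.emod_lt_of_pos m hN'; omega, ?_⟩
  have hperiod :
      exp (((m % N).toNat : ℂ) / N * (2 * π * I)) = exp ((2 * π * m / N : ℝ) * I) := by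
    have hm : (m : ℂ) = ((m % N : ℤ) : ℂ) + (N : ℂ) * ((m / N : ℤ) : ℂ) := by
      exact_mod_cast (Int.emod_add_mul_ediv m N).symm
    have hcast : (((m % N).toNat : ℕ) : ℂ) = ((m % N : ℤ) : ℂ) := by
      exact_mod_cast Int.toNat_of_nonneg (Int.emod_nonneg m hN'.ne')
    have hN0 : (N : ℂ) ≠ 0 := by exact_mod_cast hN.ne'
    have harg : ((2 * π * m / N : ℝ) : ℂ) * I
        = ((m % N : ℤ) : ℂ) / N * (2 * π * I) + ((m / N : ℤ) : ℂ) * (2 * π * I) := by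
      push_cast
      rw [hm]
      field_simp
    rw [hcast, harg, Complex.exp_add, exp_int_mul_two_pi_mul_I, mul_one]
  rw [hperiod]
  refine (norm_exp_mul_I_sub_exp_mul_I_le _ _).trans ?_
  have hNr : (0 : ℝ) < N := by exact_mod_cast hN
  have hround := abs_sub_round (θ * N / (2 * π))
  rw [show θ - 2 * π * m / N = 2 * π / N * (θ * N / (2 * π) - m) by field_simp, abs_mul,
    abs_of_pos (by positivity)]
  calc 2 * π / N * |θ * N / (2 * π) - m| ≤ 2 * π / N * (1 / 2) := by gcongr
    _ = π / N := by ring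

lemma exists_zpow_mul_le_lt {q d r : ℝ} (hq0 : 0 < q) (hq1 : q < 1) (hd : 0 < d) (hr : 0 < r) :
    ∃ j : ℤ, q ^ j * d ≤ r ∧ q * r < q ^ j * d := by
  obtain ⟨n, hn1, hn2⟩ :=
    exists_mem_Ico_zpow (div_pos hr hd) (one_lt_inv_iff₀.mpr ⟨hq0, hq1⟩)
  refine ⟨-n, ?_, ?_⟩
  · rw [zpow_neg, ← inv_zpow]
    exact (le_div_iff₀ hd).mp hn1
  · rw [zpow_add_one₀ (inv_ne_zero hq0.ne'), div_lt_iff₀ hd] at hn2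
    rw [zpow_neg, ← inv_zpow]
    calc q * r < q * (q⁻¹ ^ n * q⁻¹ * d) := by gcongr
      _ = q⁻¹ ^ n * d := by field_simp

def IsStepValue (w : ℂ) : Prop :=
  ∃ (j : ℤ) (l : ℕ), l ≤ 28 ∧ w = (4 / 5 : ℂ) ^ j * exp ((l : ℂ) / 29 * (2 * π * I))

lemma exists_isStepValue_approx {d : ℝ} (hd : 0 < d) {z : ℂ} (hz : z ≠ 0) :
    ∃ w, IsStepValue w ∧ ‖z - d * w‖ ≤ 1 / 3 * ‖z‖ ∧ ‖(d : ℂ) * w‖ ≤ ‖z‖ := by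
  obtain ⟨j, hsr, hrs⟩ := exists_zpow_mul_le_lt (q := 4 / 5) (by norm_num) (by norm_num) hd
    (norm_pos_iff.mpr hz)
  obtain ⟨l, hl, hangle⟩ := exists_norm_exp_mul_I_sub_exp_le 29 (by norm_num) (arg z)
  push_cast at hangle
  set s : ℝ := (4 / 5) ^ j * d
  set u : ℂ := exp ((l : ℂ) / 29 * (2 * π * I))
  have hs : 0 ≤ s := by positivity
  have hu : ‖u‖ = 1 := by simp [u, Complex.norm_exp]
  have hdw : (d : ℂ) * ((4 / 5) ^ j * u) = s * u := by simp only [s]; push_cast; ring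
  refine ⟨(4 / 5) ^ j * u, ⟨j, l, by omega, rfl⟩, ?_, ?_⟩
  · have hpolar :
        z - s * u = ((‖z‖ - s : ℝ) : ℂ) * exp (arg z * I) + s * (exp (arg z * I) - u) := by
      nth_rewrite 1 [← norm_mul_exp_arg_mul_I z]
      push_cast
      ring
    rw [hdw, hpolar]
    calc _ ≤ (‖z‖ - s) + s * (π / 29) := by
          refine (norm_add_le _ _).trans ?_
          rw [norm_mul, norm_mul, norm_exp_ofReal_mul_I, mul_one, norm_real, norm_real,
            Real.norm_of_nonneg (by linarith), Real.norm_of_nonneg hs]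
          gcongr
      _ ≤ 1 / 3 * ‖z‖ := by nlinarith [Real.pi_lt_d2]
  · rw [hdw, norm_mul, hu, mul_one, norm_real, Real.norm_of_nonneg hs]
    exact hsr

lemma exists_approx_of_ne_zero_isStepValue {d : ℝ} (hd : 0 < d) (z : ℂ) :
    ∃ w, (w ≠ 0 → IsStepValue w) ∧ ‖z - d * w‖ ≤ 1 / 3 * ‖z‖ ∧ ‖(d : ℂ) * w‖ ≤ ‖z‖ := by
  by_cases hz : z = 0
  · exact ⟨0, fun h => absurd rfl h, by simp [hz], by simp⟩
  · obtain ⟨w, hw, hsub, hnorm⟩ := exists_isStepValue_approx hd hz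
    exact ⟨w, fun _ => hw, hsub, hnorm⟩

/-- Lemma 3 of Butler: to any unit-norm `x ∈ ℂⁿ` and any diagonal matrix `D` with
positive real diagonal entries `d`, there is a step-vector `y ∈ ℂⁿ` with
`‖x - D y‖ ≤ 1/3`, `‖D y‖ ≤ 1`, whose nonzero entries are all of the form
`(4/5)^j · e^{(ℓ/29)·2πi}` with `j ∈ ℤ` and `0 ≤ ℓ ≤ 28`. -/
theorem butler_step_vector_approximation {n : ℕ}
    (x : Fin n → ℂ) (hx : enormC x = 1)
    (d : Fin n → ℝ) (hd : ∀ i, 0 < d i) :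
    ∃ y : Fin n → ℂ,
      enormC (fun i => x i - (d i : ℂ) * y i) ≤ 1 / 3 ∧
      enormC (fun i => (d i : ℂ) * y i) ≤ 1 ∧
      ∀ i, y i ≠ 0 → ∃ (j : ℤ) (l : ℕ), l ≤ 28 ∧
        y i = (4 / 5 : ℂ) ^ j *
          Complex.exp ((l : ℂ) / 29 * (2 * (Real.pi : ℂ) * Complex.I)) := by
  choose y hy hy_sub hy_norm using fun i => exists_approx_of_ne_zero_isStepValue (hd i) (x i)
  refine ⟨y, ?_, ?_, hy⟩
  · simpa [hx] using enormC_le_mul_of_norm_le (by norm_num) hy_sub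
  · simpa [hx] using
      enormC_le_mul_of_norm_le zero_le_one fun i => (hy_norm i).trans_eq (one_mul _).symm

end Stmt1
end

section
/- For any vector x ∈ ℝⁿ with ‖x‖ = 1 and any n×n diagonal matrix D with positive real diagonal entries, there exists a vector y ∈ ℂⁿ with ‖x − Dy‖ ≤ 1/3 and ‖Dy‖ ≤ 1 such that for each coordinate s: if x_s = 0 then y_s = 0; if x_s > 0 then y_s = (4/5)^j for some integer j; and if x_s < 0 then y_s = (4/5)^j · e^{(28/29)πi} for some integer j. -/
/-!
Approximate each coordinate separately. For `x_s ≠ 0` choose `ω = 1` if `x_s > 0` and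
`ω = e^{(28/29)πi}` if `x_s < 0`, so that `x_s · Re ω ≥ (43/45)|x_s|` since
`cos(π/29) ≥ 43/45`, and choose `j` with `(4/5)|x_s| < d_s (4/5)^j ≤ |x_s|`. Writing
`m = |x_s|` and `r = d_s (4/5)^j`, the law of cosines gives
`|x_s - r ω|² ≤ m² + r² - (86/45) m r = (m/3)² + (r - 4m/5)(r - 10m/9) ≤ (m/3)²`.
Summing the squared coordinate bounds gives `‖x - D y‖ ≤ ‖x‖/3` and `‖D y‖ ≤ ‖x‖`.
-/

open scoped BigOperators

namespace Stmt2

/-- The Euclidean norm of a complex vector. -/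
noncomputable def enormC {N : ℕ} (v : Fin N → ℂ) : ℝ :=
  Real.sqrt (∑ i, ‖v i‖ ^ 2)

open Complex
open scoped Real

lemma exists_zpow_mul_mem_Ioc {q m d : ℝ} (hq₀ : 0 < q) (hq₁ : q < 1) (hm : 0 < m)
    (hd : 0 < d) : ∃ j : ℤ, q * m < d * q ^ j ∧ d * q ^ j ≤ m := by
  obtain ⟨n, hle, hlt⟩ := exists_mem_Ico_zpow (div_pos hm hd) (one_lt_inv₀ hq₀ |>.mpr hq₁)
  have hqn : q ^ (-n) = q⁻¹ ^ n := by rw [zpow_neg, inv_zpow]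
  refine ⟨-n, ?_, ?_⟩
  · rw [zpow_add_one₀ (inv_ne_zero hq₀.ne'), div_lt_iff₀ hd] at hlt
    rw [hqn]
    calc q * m < q * (q⁻¹ ^ n * q⁻¹ * d) := mul_lt_mul_of_pos_left hlt hq₀
      _ = d * q⁻¹ ^ n := by field_simp
  · rw [hqn, mul_comm]
    exact (le_div_iff₀ hd).mp hle

lemma sq_add_sq_sub_two_mul_le {m r p : ℝ} (hp : 43 / 45 * m ≤ p) (hr : 4 / 5 * m ≤ r)
    (hrm : r ≤ m) : m ^ 2 + r ^ 2 - 2 * r * p ≤ (m / 3) ^ 2 := by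
  have hr₀ : 0 ≤ r := by linarith
  nlinarith [mul_nonneg (sub_nonneg.mpr hr) (by linarith : 0 ≤ 10 / 9 * m - r),
    mul_nonneg hr₀ (sub_nonneg.mpr hp)]

lemma norm_ofReal_sub_ofReal_mul_sq {ω : ℂ} (hω : ‖ω‖ = 1) (x r : ℝ) :
    ‖(x : ℂ) - r * ω‖ ^ 2 = x ^ 2 + r ^ 2 - 2 * r * (x * ω.re) := by
  have hω' : ω.re ^ 2 + ω.im ^ 2 = 1 := by
    have h := Complex.sq_norm ω
    rw [hω, normSq_apply] at h
    linarith
  rw [Complex.sq_norm, normSq_apply]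
  simp only [sub_re, sub_im, mul_re, mul_im, ofReal_re, ofReal_im]
  linear_combination r ^ 2 * hω'

lemma cos_pi_div_twentyNine_ge : (43 / 45 : ℝ) ≤ Real.cos (π / 29) := by
  have := Real.one_sub_sq_div_two_le_cos (x := π / 29)
  nlinarith [Real.pi_pos, Real.pi_le_four]

lemma exists_zpow_mul_approx {ω : ℂ} (hω : ‖ω‖ = 1) {x d : ℝ} (hx : x ≠ 0) (hd : 0 < d)
    (hxω : 43 / 45 * |x| ≤ x * ω.re) :
    ∃ j : ℤ, ‖(x : ℂ) - d * ((4 / 5) ^ j * ω)‖ ≤ 1 / 3 * |x| ∧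
      ‖(d : ℂ) * ((4 / 5) ^ j * ω)‖ ≤ |x| := by
  obtain ⟨j, hlt, hle⟩ :=
    exists_zpow_mul_mem_Ioc (q := 4 / 5) (by norm_num) (by norm_num) (abs_pos.mpr hx) hd
  have hr : (d : ℂ) * ((4 / 5) ^ j * ω) = ((d * (4 / 5) ^ j : ℝ) : ℂ) * ω := by
    push_cast; ring
  refine ⟨j, ?_, ?_⟩
  · rw [hr, ← sq_le_sq₀ (norm_nonneg _) (by positivity), norm_ofReal_sub_ofReal_mul_sq hω,
      ← sq_abs x]
    linarith [sq_add_sq_sub_two_mul_le hxω hlt.le hle]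
  · rwa [hr, norm_mul, hω, mul_one, norm_real, Real.norm_of_nonneg (by positivity)]

lemma exp_28_div_29_pi_mul_I_re :
    (exp ((28 / 29 : ℂ) * π * I)).re = -Real.cos (π / 29) := by
  rw [show (28 / 29 : ℂ) * π = ((28 / 29 * π : ℝ) : ℂ) by push_cast; ring, exp_ofReal_mul_I_re,
    show 28 / 29 * π = π - π / 29 by ring, Real.cos_pi_sub]

lemma exists_step_approx_coord {x d : ℝ} (hd : 0 < d) :
    ∃ z : ℂ, (x = 0 → z = 0) ∧ (0 < x → ∃ j : ℤ, z = (4 / 5 : ℂ) ^ j) ∧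
      (x < 0 → ∃ j : ℤ, z = (4 / 5 : ℂ) ^ j * exp ((28 / 29 : ℂ) * π * I)) ∧
      ‖(x : ℂ) - d * z‖ ≤ 1 / 3 * |x| ∧ ‖(d : ℂ) * z‖ ≤ |x| := by
  rcases lt_trichotomy x 0 with hneg | rfl | hpos
  · have hω : ‖exp ((28 / 29 : ℂ) * π * I)‖ = 1 := by
      rw [show (28 / 29 : ℂ) * π = ((28 / 29 * π : ℝ) : ℂ) by push_cast; ring]
      exact norm_exp_ofReal_mul_I _
    have hxω : 43 / 45 * |x| ≤ x * (exp ((28 / 29 : ℂ) * π * I)).re := by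
      rw [exp_28_div_29_pi_mul_I_re, abs_of_neg hneg]
      nlinarith [cos_pi_div_twentyNine_ge]
    obtain ⟨j, herr, hnorm⟩ := exists_zpow_mul_approx hω hneg.ne hd hxω
    exact ⟨_, fun h => absurd h hneg.ne, fun h => absurd h hneg.not_gt, fun _ => ⟨j, rfl⟩,
      herr, hnorm⟩
  · exact ⟨0, fun _ => rfl, fun h => absurd h (lt_irrefl 0), fun h => absurd h (lt_irrefl 0),
      by simp, by simp⟩
  · obtain ⟨j, herr, hnorm⟩ := exists_zpow_mul_approx (ω := 1) norm_one hpos.ne' hd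
      (by rw [abs_of_pos hpos, one_re]; linarith)
    rw [mul_one] at herr hnorm
    exact ⟨_, fun h => absurd h hpos.ne', fun _ => ⟨j, rfl⟩, fun h => absurd h hpos.not_gt,
      herr, hnorm⟩

lemma enormC_le_mul_sqrt {N : ℕ} {v : Fin N → ℂ} {w : Fin N → ℝ} {c : ℝ} (hc : 0 ≤ c)
    (h : ∀ i, ‖v i‖ ≤ c * |w i|) : enormC v ≤ c * √(∑ i, w i ^ 2) := by
  have hsq : ∀ i, ‖v i‖ ^ 2 ≤ c ^ 2 * w i ^ 2 := fun i => by
    rw [← sq_abs (w i), ← mul_pow]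
    exact pow_le_pow_left₀ (norm_nonneg _) (h i) 2
  calc enormC v ≤ √(c ^ 2 * ∑ i, w i ^ 2) := by
        rw [Finset.mul_sum]
        exact Real.sqrt_le_sqrt (Finset.sum_le_sum fun i _ => hsq i)
    _ = c * √(∑ i, w i ^ 2) := by rw [Real.sqrt_mul (sq_nonneg c), Real.sqrt_sq hc]

/-- The refinement, for real input vectors, of Butler's step-vector
approximation: to any unit-norm `x ∈ ℝⁿ` and any diagonal matrix `D` with
positive real diagonal entries `d`, there is `y ∈ ℂⁿ` with `‖x - D y‖ ≤ 1/3`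
and `‖D y‖ ≤ 1` such that coordinatewise: `x_s = 0 → y_s = 0`;
`x_s > 0 → y_s = (4/5)^j` for some `j ∈ ℤ`; and
`x_s < 0 → y_s = (4/5)^j · e^{(28/29)πi}` for some `j ∈ ℤ`. -/
theorem butler_step_vector_approximation_real {n : ℕ}
    (x : Fin n → ℝ) (hx : Real.sqrt (∑ i, x i ^ 2) = 1)
    (d : Fin n → ℝ) (hd : ∀ i, 0 < d i) :
    ∃ y : Fin n → ℂ,
      enormC (fun i => (x i : ℂ) - (d i : ℂ) * y i) ≤ 1 / 3 ∧
      enormC (fun i => (d i : ℂ) * y i) ≤ 1 ∧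
      ∀ s, (x s = 0 → y s = 0) ∧
        (0 < x s → ∃ j : ℤ, y s = (4 / 5 : ℂ) ^ j) ∧
        (x s < 0 → ∃ j : ℤ, y s = (4 / 5 : ℂ) ^ j *
          Complex.exp ((28 / 29 : ℂ) * (Real.pi : ℂ) * Complex.I)) := by
  choose y hzero hpos hneg herr hnorm using fun s => exists_step_approx_coord (x := x s) (hd s)
  refine ⟨y, ?_, ?_, fun s => ⟨hzero s, hpos s, hneg s⟩⟩
  · simpa [hx] using enormC_le_mul_sqrt (by norm_num) herr
  · simpa [hx] using enormC_le_mul_sqrt zero_le_one fun i => (hnorm i).trans_eq (one_mul _).symm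

end Stmt2
end

section
/- Let M be a complex m×n matrix with largest singular value σ and corresponding unit-norm left and right singular vectors v ∈ ℂᵐ and u ∈ ℂⁿ. If x ∈ ℂᵐ and y ∈ ℂⁿ are vectors satisfying ‖x‖ ≤ 1, ‖y‖ ≤ 1, ‖v − x‖ ≤ 1/3, and ‖u − y‖ ≤ 1/3, then σ ≤ (9/2)·|⟨x, M y⟩|. -/
/-! Write `T` for `M` as an operator on Euclidean space, so that `σ = ‖T‖`.
The defect `⟨v, T u⟩ - ⟨x, T y⟩ = ⟨v - x, T u⟩ + ⟨x, T (u - y)⟩` has modulus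
at most `‖T‖ (‖v - x‖ + ‖u - y‖) ≤ 2σ/3` by Cauchy–Schwarz, hence
`σ ≤ 3 |⟨x, T y⟩|`. -/

open scoped BigOperators

namespace Stmt3

/-- The Euclidean norm of a complex vector. -/
noncomputable def enormC {N : ℕ} (v : Fin N → ℂ) : ℝ :=
  Real.sqrt (∑ i, ‖v i‖ ^ 2)

/-- The complex inner product `⟨x, y⟩ = ∑ conj(x_i) y_i`. -/
noncomputable def cinner {N : ℕ} (x y : Fin N → ℂ) : ℂ :=
  ∑ i, (starRingEnd ℂ) (x i) * y i

/-- The spectral norm of a complex matrix: the supremum of `‖A v‖` over unit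
vectors `v`. -/
noncomputable def specNormC {M N : ℕ} (A : Matrix (Fin M) (Fin N) ℂ) : ℝ :=
  sSup {t : ℝ | ∃ v : Fin N → ℂ, enormC v = 1 ∧ t = enormC (A.mulVec v)}

open WithLp InnerProductSpace

lemma enormC_eq_norm {N : ℕ} (w : Fin N → ℂ) : enormC w = ‖toLp 2 w‖ := by
  simp [enormC, EuclideanSpace.norm_eq]

lemma cinner_eq_inner {N : ℕ} (x y : Fin N → ℂ) :
    cinner x y = ⟪toLp 2 x, toLp 2 y⟫_ℂ := by
  simp [cinner, PiLp.inner_apply, mul_comm]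

lemma enormC_sub_eq_norm {N : ℕ} (v x : Fin N → ℂ) :
    enormC (fun i => v i - x i) = ‖toLp 2 v - toLp 2 x‖ := by
  rw [← WithLp.toLp_sub, enormC_eq_norm]
  rfl

lemma specNormC_eq_opNorm {m n : ℕ} (A : Matrix (Fin m) (Fin n) ℂ) :
    specNormC A = ‖LinearMap.toContinuousLinearMap (Matrix.toEuclideanLin A)‖ := by
  rw [← ContinuousLinearMap.sSup_sphere_eq_norm, specNormC]
  congr 1
  ext t
  simp only [Set.mem_ofPred_eq, Set.mem_image, mem_sphere_iff_norm, sub_zero,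
    LinearMap.coe_toContinuousLinearMap', Matrix.toLpLin_apply]
  constructor
  · rintro ⟨w, hw, rfl⟩
    exact ⟨toLp 2 w, by rwa [← enormC_eq_norm], by rw [enormC_eq_norm]⟩
  · rintro ⟨w, hw, rfl⟩
    exact ⟨ofLp w, by rwa [enormC_eq_norm], by rw [enormC_eq_norm]⟩

theorem _root_.ContinuousLinearMap.norm_inner_apply_sub_inner_apply_le {𝕜 E F : Type*}
    [RCLike 𝕜] [NormedAddCommGroup E] [InnerProductSpace 𝕜 E]
    [NormedAddCommGroup F] [InnerProductSpace 𝕜 F]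
    (T : E →L[𝕜] F) {u y : E} {v x : F} (hu : ‖u‖ ≤ 1) (hx : ‖x‖ ≤ 1) :
    ‖⟪v, T u⟫_𝕜 - ⟪x, T y⟫_𝕜‖ ≤ ‖T‖ * (‖v - x‖ + ‖u - y‖) := by
  have hsplit :
      ⟪v, T u⟫_𝕜 - ⟪x, T y⟫_𝕜 = ⟪v - x, T u⟫_𝕜 + ⟪x, T (u - y)⟫_𝕜 := by
    rw [inner_sub_left, map_sub, inner_sub_right]; ring
  have hleft : ‖⟪v - x, T u⟫_𝕜‖ ≤ ‖T‖ * ‖v - x‖ :=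
    calc ‖⟪v - x, T u⟫_𝕜‖ ≤ ‖v - x‖ * (‖T‖ * ‖u‖) :=
          (norm_inner_le_norm _ _).trans (by gcongr; exact T.le_opNorm u)
      _ ≤ ‖v - x‖ * (‖T‖ * 1) := by gcongr
      _ = ‖T‖ * ‖v - x‖ := by ring
  have hright : ‖⟪x, T (u - y)⟫_𝕜‖ ≤ ‖T‖ * ‖u - y‖ :=
    calc ‖⟪x, T (u - y)⟫_𝕜‖ ≤ ‖x‖ * (‖T‖ * ‖u - y‖) :=
          (norm_inner_le_norm _ _).trans (by gcongr; exact T.le_opNorm _)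
      _ ≤ 1 * (‖T‖ * ‖u - y‖) := by gcongr
      _ = ‖T‖ * ‖u - y‖ := one_mul _
  rw [hsplit, mul_add]
  exact (norm_add_le _ _).trans (add_le_add hleft hright)

theorem singular_value_le_of_approximation_general {m n : ℕ}
    (M : Matrix (Fin m) (Fin n) ℂ) (σ : ℝ)
    (v : Fin m → ℂ) (u : Fin n → ℂ)
    (hu : enormC u = 1)
    (hσ : σ = specNormC M)
    (hvu : ‖cinner v (M.mulVec u)‖ = σ)
    (x : Fin m → ℂ) (y : Fin n → ℂ)
    (hx : enormC x ≤ 1)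
    (hvx : enormC (fun i => v i - x i) ≤ 1 / 3)
    (huy : enormC (fun i => u i - y i) ≤ 1 / 3) :
    σ ≤ (9 / 2) * ‖cinner x (M.mulVec y)‖ := by
  rw [specNormC_eq_opNorm] at hσ
  rw [enormC_eq_norm] at hu hx
  rw [enormC_sub_eq_norm] at hvx huy
  set T := LinearMap.toContinuousLinearMap (Matrix.toEuclideanLin M)
  have hcinner (w : Fin m → ℂ) (z : Fin n → ℂ) :
      cinner w (M.mulVec z) = ⟪toLp 2 w, T (toLp 2 z)⟫_ℂ :=
    cinner_eq_inner _ _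
  have hσ_nonneg : 0 ≤ σ := hvu ▸ norm_nonneg _
  have hclose : σ - ‖cinner x (M.mulVec y)‖ ≤ σ * (1 / 3 + 1 / 3) :=
    calc σ - ‖cinner x (M.mulVec y)‖ ≤ ‖cinner v (M.mulVec u) - cinner x (M.mulVec y)‖ :=
          hvu ▸ norm_sub_norm_le _ _
      _ ≤ σ * (‖toLp 2 v - toLp 2 x‖ + ‖toLp 2 u - toLp 2 y‖) := by
          rw [hcinner, hcinner, hσ]
          exact T.norm_inner_apply_sub_inner_apply_le hu.le hx
      _ ≤ σ * (1 / 3 + 1 / 3) := by gcongr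
  linarith [norm_nonneg (cinner x (M.mulVec y))]

/-- Lemma 4 of Butler: let `M` be a complex `m × n` matrix with largest singular
value `σ` and corresponding unit-norm singular vector pair `v, u` (so `‖v‖ = ‖u‖ = 1`
and `|⟨v, M u⟩| = σ` equals the spectral norm of `M`).  If `‖x‖ ≤ 1`, `‖y‖ ≤ 1`,
`‖v - x‖ ≤ 1/3` and `‖u - y‖ ≤ 1/3`, then `σ ≤ (9/2)·|⟨x, M y⟩|`. -/
theorem singular_value_le_of_approximation {m n : ℕ}
    (M : Matrix (Fin m) (Fin n) ℂ) (σ : ℝ)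
    (v : Fin m → ℂ) (u : Fin n → ℂ)
    (hv : enormC v = 1) (hu : enormC u = 1)
    (hσ : σ = specNormC M)
    (hvu : ‖cinner v (M.mulVec u)‖ = σ)
    (x : Fin m → ℂ) (y : Fin n → ℂ)
    (hx : enormC x ≤ 1) (hy : enormC y ≤ 1)
    (hvx : enormC (fun i => v i - x i) ≤ 1 / 3)
    (huy : enormC (fun i => u i - y i) ≤ 1 / 3) :
    σ ≤ (9 / 2) * ‖cinner x (M.mulVec y)‖ :=
  singular_value_le_of_approximation_general M σ v u hu hσ hvu x y hx hvx huy

end Stmt3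
end

section
/- Let C be an m×n matrix of nonnegative real entries, and let d_{r,1},…,d_{r,m} and d_{c,1},…,d_{c,n} be positive real row- and column-weights collected in diagonal matrices D_r and D_c. Let R_1,…,R_k and C_1,…,C_ℓ be proper partitions of the rows and columns, and let x ∈ ℂᵐ and y ∈ ℂⁿ be stepwise constant vectors (constant on each R_a and on each C_b, respectively). Define the k×ℓ real matrix C′ by c′_{ab} = c(R_a,C_b)/√(VOL(R_a)·VOL(C_b)), where c(R_a,C_b) = Σ_{i∈R_a}Σ_{j∈C_b} c_{ij}, VOL(R_a) = Σ_{i∈R_a} d_{r,i}, VOL(C_b) = Σ_{j∈C_b} d_{c,j}. Then |⟨x, C y⟩| ≤ ‖C′‖ · ‖D_r^{1/2} x‖ · ‖D_c^{1/2} y‖, where ‖C′‖ is the spectral norm (largest singular value) of C′. -/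
/-!
Since `x` and `y` are constant on the blocks, say with values `ξ_a` and `η_b`, the form
`⟨x, C y⟩` only sees the block sums `c(R_a, C_b) = √VOL(R_a) · c'_{ab} · √VOL(C_b)`, so it equals
`⟨p, C' q⟩` for `p_a = √VOL(R_a) ξ_a` and `q_b = √VOL(C_b) η_b`. These compressed vectors have
the weighted norms `‖p‖ = ‖D_r^{1/2} x‖` and `‖q‖ = ‖D_c^{1/2} y‖`, and Cauchy–Schwarz gives
`|⟨p, C' q⟩| ≤ ‖p‖ ‖C' q‖ ≤ ‖C'‖ ‖p‖ ‖q‖`; the last step for complex `q` follows from the real one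
applied to the real and imaginary parts of `q`.
-/

open scoped BigOperators

namespace Stmt4

/-- The Euclidean norm of a complex vector. -/
noncomputable def enormC {N : ℕ} (v : Fin N → ℂ) : ℝ :=
  Real.sqrt (∑ i, ‖v i‖ ^ 2)

/-- The Euclidean norm of a real vector. -/
noncomputable def enormR {N : ℕ} (v : Fin N → ℝ) : ℝ :=
  Real.sqrt (∑ i, v i ^ 2)

/-- The complex inner product `⟨x, y⟩ = ∑ conj(x_i) y_i`. -/
noncomputable def cinner {N : ℕ} (x y : Fin N → ℂ) : ℂ :=
  ∑ i, (starRingEnd ℂ) (x i) * y i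

/-- The spectral norm (largest singular value) of a real matrix: the supremum of
`‖A v‖` over unit vectors `v`. -/
noncomputable def specNormR {M N : ℕ} (A : Matrix (Fin M) (Fin N) ℝ) : ℝ :=
  sSup {t : ℝ | ∃ v : Fin N → ℝ, enormR v = 1 ∧ t = enormR (A.mulVec v)}

/-- The cut `c(X,Y)` of `C` between a row-subset `X` and a column-subset `Y`. -/
noncomputable def cut {m n : ℕ} (C : Matrix (Fin m) (Fin n) ℝ)
    (X : Finset (Fin m)) (Y : Finset (Fin n)) : ℝ :=
  ∑ i ∈ X, ∑ j ∈ Y, C i j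

/-- A proper partition: nonempty parts, pairwise disjoint, covering everything. -/
def IsProperPartition {N k : ℕ} (P : Fin k → Finset (Fin N)) : Prop :=
  (∀ a, (P a).Nonempty) ∧ (∀ a b, a ≠ b → Disjoint (P a) (P b)) ∧ (∀ i, ∃ a, i ∈ P a)

lemma enormR_eq_norm {N : ℕ} (v : Fin N → ℝ) : enormR v = ‖WithLp.toLp 2 v‖ := by
  rw [EuclideanSpace.norm_eq]
  simp [enormR]

lemma enormC_eq_norm {N : ℕ} (v : Fin N → ℂ) : enormC v = ‖WithLp.toLp 2 v‖ := by
  rw [EuclideanSpace.norm_eq]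
  rfl

lemma enormR_nonneg {N : ℕ} (v : Fin N → ℝ) : 0 ≤ enormR v := Real.sqrt_nonneg _

lemma enormC_nonneg {N : ℕ} (v : Fin N → ℂ) : 0 ≤ enormC v := Real.sqrt_nonneg _

lemma enormR_smul {N : ℕ} (t : ℝ) (v : Fin N → ℝ) : enormR (t • v) = |t| * enormR v := by
  rw [enormR_eq_norm, enormR_eq_norm, WithLp.toLp_smul, norm_smul, Real.norm_eq_abs]

lemma enormC_sq {N : ℕ} (v : Fin N → ℂ) :
    enormC v ^ 2 = enormR (fun i => (v i).re) ^ 2 + enormR (fun i => (v i).im) ^ 2 := by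
  simp only [enormC, enormR]
  rw [Real.sq_sqrt (by positivity), Real.sq_sqrt (by positivity), Real.sq_sqrt (by positivity),
    ← Finset.sum_add_distrib]
  refine Finset.sum_congr rfl fun i _ => ?_
  rw [Complex.sq_norm, Complex.normSq_apply]
  ring

lemma cinner_eq_inner {N : ℕ} (x y : Fin N → ℂ) :
    cinner x y = inner ℂ (WithLp.toLp 2 x) (WithLp.toLp 2 y) := by
  simp [PiLp.inner_apply, cinner, mul_comm]

lemma norm_cinner_le {N : ℕ} (x y : Fin N → ℂ) : ‖cinner x y‖ ≤ enormC x * enormC y := by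
  rw [cinner_eq_inner, enormC_eq_norm, enormC_eq_norm]
  exact norm_inner_le_norm _ _

lemma cinner_map_ofReal_mulVec {M N : ℕ} (x : Fin M → ℂ) (A : Matrix (Fin M) (Fin N) ℝ)
    (y : Fin N → ℂ) :
    cinner x ((A.map (fun r => (r : ℂ))).mulVec y) =
      ∑ i, ∑ j, (starRingEnd ℂ) (x i) * A i j * y j := by
  simp only [cinner, Matrix.mulVec, dotProduct, Matrix.map_apply, Finset.mul_sum, mul_assoc]

section SpectralNorm

open scoped Matrix.Norms.L2Operator

variable {M N : ℕ} (A : Matrix (Fin M) (Fin N) ℝ)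

lemma enormR_mulVec_le_l2_opNorm (v : Fin N → ℝ) : enormR (A.mulVec v) ≤ ‖A‖ * enormR v := by
  rw [enormR_eq_norm, enormR_eq_norm]
  exact A.l2_opNorm_mulVec (WithLp.toLp 2 v)

lemma bddAbove_specNormR_set :
    BddAbove {t : ℝ | ∃ v : Fin N → ℝ, enormR v = 1 ∧ t = enormR (A.mulVec v)} := by
  refine ⟨‖A‖, ?_⟩
  rintro _ ⟨v, hv, rfl⟩
  simpa [hv] using enormR_mulVec_le_l2_opNorm A v

lemma specNormR_nonneg : 0 ≤ specNormR A :=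
  Real.sSup_nonneg <| by
    rintro _ ⟨v, -, rfl⟩
    exact enormR_nonneg _

lemma enormR_mulVec_le (v : Fin N → ℝ) : enormR (A.mulVec v) ≤ specNormR A * enormR v := by
  rcases eq_or_ne v 0 with rfl | hv
  · simp [enormR]
  have hc : 0 < enormR v := by
    rw [enormR_eq_norm]
    exact norm_pos_iff.2 fun h => hv (congrArg WithLp.ofLp h)
  have hunit : enormR ((enormR v)⁻¹ • v) = 1 := by
    rw [enormR_smul, abs_inv, abs_of_pos hc, inv_mul_cancel₀ hc.ne']
  have hle := le_csSup (bddAbove_specNormR_set A) ⟨_, hunit, rfl⟩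
  rw [Matrix.mulVec_smul, enormR_smul, abs_inv, abs_of_pos hc, inv_mul_le_iff₀ hc] at hle
  exact hle.trans_eq (mul_comm _ _)

lemma enormC_map_ofReal_mulVec_le (q : Fin N → ℂ) :
    enormC ((A.map (fun r => (r : ℂ))).mulVec q) ≤ specNormR A * enormC q := by
  have hre : (fun i => ((A.map (fun r => (r : ℂ))).mulVec q i).re) =
      A.mulVec (fun j => (q j).re) := by
    ext i; simp [Matrix.mulVec, dotProduct, Complex.re_sum]
  have him : (fun i => ((A.map (fun r => (r : ℂ))).mulVec q i).im) =
      A.mulVec (fun j => (q j).im) := by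
    ext i; simp [Matrix.mulVec, dotProduct, Complex.im_sum]
  rw [← pow_le_pow_iff_left₀ (enormC_nonneg _)
    (mul_nonneg (specNormR_nonneg A) (enormC_nonneg q)) two_ne_zero,
    mul_pow, enormC_sq, enormC_sq, hre, him]
  have hre_le := pow_le_pow_left₀ (enormR_nonneg _) (enormR_mulVec_le A fun j => (q j).re) 2
  have him_le := pow_le_pow_left₀ (enormR_nonneg _) (enormR_mulVec_le A fun j => (q j).im) 2
  rw [mul_pow] at hre_le him_le
  linarith

end SpectralNorm

lemma norm_ofReal_sqrt_mul_sq {t : ℝ} (ht : 0 ≤ t) (z : ℂ) :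
    ‖(Real.sqrt t : ℂ) * z‖ ^ 2 = t * ‖z‖ ^ 2 := by
  rw [norm_mul, mul_pow, Complex.norm_real, Real.norm_eq_abs, sq_abs, Real.sq_sqrt ht]

namespace IsProperPartition

variable {N k : ℕ} {P : Fin k → Finset (Fin N)}

lemma sum_eq_sum_sum (hP : IsProperPartition P) {β : Type*} [AddCommMonoid β] (f : Fin N → β) :
    ∑ i, f i = ∑ a, ∑ i ∈ P a, f i := by
  classical
  rw [← Finset.sum_biUnion fun a _ b _ hab => hP.2.1 a b hab]
  congr
  ext i
  simpa using hP.2.2 i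

lemma exists_eq_of_forall_eq (hP : IsProperPartition P) {α : Type*} {x : Fin N → α}
    (hx : ∀ a, ∀ i ∈ P a, ∀ i' ∈ P a, x i = x i') : ∃ ξ : Fin k → α, ∀ a, ∀ i ∈ P a, x i = ξ a :=
  ⟨fun a => x (hP.1 a).choose, fun a i hi => hx a i hi _ (hP.1 a).choose_spec⟩

lemma enormC_sqrt_mul_eq (hP : IsProperPartition P) {d : Fin N → ℝ} (hd : ∀ i, 0 ≤ d i)
    {x : Fin N → ℂ} {ξ : Fin k → ℂ} (hξ : ∀ a, ∀ i ∈ P a, x i = ξ a) :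
    enormC (fun i => (Real.sqrt (d i) : ℂ) * x i) =
      enormC (fun a => (Real.sqrt (∑ i ∈ P a, d i) : ℂ) * ξ a) := by
  unfold enormC
  congr 1
  simp only [norm_ofReal_sqrt_mul_sq (hd _),
    norm_ofReal_sqrt_mul_sq (Finset.sum_nonneg fun i _ => hd i)]
  rw [hP.sum_eq_sum_sum]
  refine Finset.sum_congr rfl fun a _ => ?_
  rw [Finset.sum_mul]
  exact Finset.sum_congr rfl fun i hi => by rw [hξ a i hi]

end IsProperPartition

lemma cinner_map_ofReal_mulVec_eq_sum_cut {m n k l : ℕ} (C : Matrix (Fin m) (Fin n) ℝ)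
    {R : Fin k → Finset (Fin m)} {Cc : Fin l → Finset (Fin n)}
    (hR : IsProperPartition R) (hCc : IsProperPartition Cc)
    {x : Fin m → ℂ} {y : Fin n → ℂ} {ξ : Fin k → ℂ} {η : Fin l → ℂ}
    (hξ : ∀ a, ∀ i ∈ R a, x i = ξ a) (hη : ∀ b, ∀ j ∈ Cc b, y j = η b) :
    cinner x ((C.map (fun r => (r : ℂ))).mulVec y) =
      ∑ a, ∑ b, (starRingEnd ℂ) (ξ a) * cut C (R a) (Cc b) * η b := by
  rw [cinner_map_ofReal_mulVec, hR.sum_eq_sum_sum]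
  refine Finset.sum_congr rfl fun a _ => ?_
  simp_rw [hCc.sum_eq_sum_sum (fun j => _ * _ * y j)]
  rw [Finset.sum_comm]
  refine Finset.sum_congr rfl fun b _ => ?_
  simp only [cut, Complex.ofReal_sum, Finset.mul_sum, Finset.sum_mul]
  refine Finset.sum_congr rfl fun i hi => Finset.sum_congr rfl fun j hj => ?_
  rw [hξ a i hi, hη b j hj]

theorem inner_bound_via_block_matrix_general {m n k l : ℕ}
    (C : Matrix (Fin m) (Fin n) ℝ)
    (dr : Fin m → ℝ) (dc : Fin n → ℝ)
    (hdr : ∀ i, 0 < dr i) (hdc : ∀ j, 0 < dc j)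
    (R : Fin k → Finset (Fin m)) (Cc : Fin l → Finset (Fin n))
    (hR : IsProperPartition R) (hCc : IsProperPartition Cc)
    (x : Fin m → ℂ) (y : Fin n → ℂ)
    (hx : ∀ a : Fin k, ∀ i ∈ R a, ∀ i' ∈ R a, x i = x i')
    (hy : ∀ b : Fin l, ∀ j ∈ Cc b, ∀ j' ∈ Cc b, y j = y j')
    (C' : Matrix (Fin k) (Fin l) ℝ)
    (hC' : ∀ a b, C' a b =
      cut C (R a) (Cc b) /
        Real.sqrt ((∑ i ∈ R a, dr i) * (∑ j ∈ Cc b, dc j))) :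
    ‖cinner x ((C.map (fun r => (r : ℂ))).mulVec y)‖ ≤
      specNormR C' * enormC (fun i => (Real.sqrt (dr i) : ℂ) * x i) *
        enormC (fun j => (Real.sqrt (dc j) : ℂ) * y j) := by
  obtain ⟨ξ, hξ⟩ := hR.exists_eq_of_forall_eq hx
  obtain ⟨η, hη⟩ := hCc.exists_eq_of_forall_eq hy
  have hV (a : Fin k) : 0 < ∑ i ∈ R a, dr i := Finset.sum_pos (fun i _ => hdr i) (hR.1 a)
  have hW (b : Fin l) : 0 < ∑ j ∈ Cc b, dc j := Finset.sum_pos (fun j _ => hdc j) (hCc.1 b)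
  have hcut (a : Fin k) (b : Fin l) : cut C (R a) (Cc b) =
      Real.sqrt (∑ i ∈ R a, dr i) * C' a b * Real.sqrt (∑ j ∈ Cc b, dc j) := by
    have hVa := Real.sqrt_pos.2 (hV a)
    have hWb := Real.sqrt_pos.2 (hW b)
    rw [hC', Real.sqrt_mul (hV a).le]
    field_simp
  set p : Fin k → ℂ := fun a => (Real.sqrt (∑ i ∈ R a, dr i) : ℂ) * ξ a
  set q : Fin l → ℂ := fun b => (Real.sqrt (∑ j ∈ Cc b, dc j) : ℂ) * η b
  have hinner : cinner x ((C.map (fun r => (r : ℂ))).mulVec y) =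
      cinner p ((C'.map (fun r => (r : ℂ))).mulVec q) := by
    rw [cinner_map_ofReal_mulVec_eq_sum_cut C hR hCc hξ hη, cinner_map_ofReal_mulVec]
    simp only [hcut, p, q, map_mul, Complex.conj_ofReal, Complex.ofReal_mul]
    exact Finset.sum_congr rfl fun a _ => Finset.sum_congr rfl fun b _ => by ring
  calc ‖cinner x ((C.map (fun r => (r : ℂ))).mulVec y)‖
      ≤ enormC p * enormC ((C'.map (fun r => (r : ℂ))).mulVec q) := hinner ▸ norm_cinner_le _ _
    _ ≤ enormC p * (specNormR C' * enormC q) :=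
        mul_le_mul_of_nonneg_left (enormC_map_ofReal_mulVec_le C' q) (enormC_nonneg p)
    _ = specNormR C' * enormC (fun i => (Real.sqrt (dr i) : ℂ) * x i) *
          enormC (fun j => (Real.sqrt (dc j) : ℂ) * y j) := by
        rw [hR.enormC_sqrt_mul_eq (fun i => (hdr i).le) hξ,
          hCc.enormC_sqrt_mul_eq (fun j => (hdc j).le) hη]
        ring

/-- Lemma 3 (the author's own): with row-weights `dr`, column-weights `dc`
(arbitrary positive reals, independent of the entries of `C`), proper partitions
`R_1,…,R_k` of the rows and `C_1,…,C_ℓ` of the columns, stepwise constant vectors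
`x ∈ ℂᵐ`, `y ∈ ℂⁿ`, and the `k × ℓ` matrix `C'` with
`c'_{ab} = c(R_a,C_b)/√(VOL(R_a)·VOL(C_b))`, one has
`|⟨x, C y⟩| ≤ ‖C'‖ · ‖D_r^{1/2} x‖ · ‖D_c^{1/2} y‖`. -/
theorem inner_bound_via_block_matrix {m n k l : ℕ}
    (C : Matrix (Fin m) (Fin n) ℝ)
    (hnonneg : ∀ i j, 0 ≤ C i j)
    (dr : Fin m → ℝ) (dc : Fin n → ℝ)
    (hdr : ∀ i, 0 < dr i) (hdc : ∀ j, 0 < dc j)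
    (R : Fin k → Finset (Fin m)) (Cc : Fin l → Finset (Fin n))
    (hR : IsProperPartition R) (hCc : IsProperPartition Cc)
    (x : Fin m → ℂ) (y : Fin n → ℂ)
    (hx : ∀ a : Fin k, ∀ i ∈ R a, ∀ i' ∈ R a, x i = x i')
    (hy : ∀ b : Fin l, ∀ j ∈ Cc b, ∀ j' ∈ Cc b, y j = y j')
    (C' : Matrix (Fin k) (Fin l) ℝ)
    (hC' : ∀ a b, C' a b =
      cut C (R a) (Cc b) /
        Real.sqrt ((∑ i ∈ R a, dr i) * (∑ j ∈ Cc b, dc j))) :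
    ‖cinner x ((C.map (fun r => (r : ℂ))).mulVec y)‖ ≤
      specNormR C' * enormC (fun i => (Real.sqrt (dr i) : ℂ) * x i) *
        enormC (fun j => (Real.sqrt (dc j) : ℂ) * y j) :=
  inner_bound_via_block_matrix_general C dr dc hdr hdc R Cc hR hCc x y hx hy C' hC'

end Stmt4
end

section
/- For every edge-weighted undirected graph G = (V, W) with irreducible weight matrix, disc_1(G) ≤ ‖M_D‖, where ‖M_D‖ is the spectral norm of the normalized modularity matrix of G (which equals the largest nontrivial singular value s_1 = |μ_1| of the normalized weight matrix W_D = D^{-1/2} W D^{-1/2}). -/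
open scoped BigOperators

namespace Stmt6

variable {n : ℕ}

/-- The degree `d_i = ∑ j, w_{ij}` of vertex `i`. -/
noncomputable def deg (W : Matrix (Fin n) (Fin n) ℝ) (i : Fin n) : ℝ := ∑ j, W i j

/-- The volume `Vol(U) = ∑_{i ∈ U} d_i` of a vertex subset. -/
noncomputable def vol (W : Matrix (Fin n) (Fin n) ℝ) (U : Finset (Fin n)) : ℝ :=
  ∑ i ∈ U, deg W i

/-- The cut `w(X,Y) = ∑_{i ∈ X} ∑_{j ∈ Y} w_{ij}`. -/
noncomputable def cut (W : Matrix (Fin n) (Fin n) ℝ) (X Y : Finset (Fin n)) : ℝ :=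
  ∑ i ∈ X, ∑ j ∈ Y, W i j

/-- The 1-way discrepancy `disc_1(G)`: the maximum over all `X, Y ⊆ V` of
`|w(X,Y) - Vol(X) Vol(Y)| / √(Vol(X) Vol(Y))` (note `ρ(V,V) = 1` since the total
weight is 1). -/
noncomputable def disc1 (W : Matrix (Fin n) (Fin n) ℝ) : ℝ :=
  sSup {t : ℝ | ∃ X Y : Finset (Fin n),
    t = |cut W X Y - vol W X * vol W Y| / Real.sqrt (vol W X * vol W Y)}

/-- The normalized modularity matrix `M_D = D^{-1/2} (W - d dᵀ) D^{-1/2}`. -/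
noncomputable def MD (W : Matrix (Fin n) (Fin n) ℝ) : Matrix (Fin n) (Fin n) ℝ :=
  Matrix.diagonal (fun i => (Real.sqrt (deg W i))⁻¹) *
    (W - Matrix.of fun i j => deg W i * deg W j) *
    Matrix.diagonal (fun i => (Real.sqrt (deg W i))⁻¹)

/-- The Euclidean norm of a real vector. -/
noncomputable def enormR {N : ℕ} (v : Fin N → ℝ) : ℝ :=
  Real.sqrt (∑ i, v i ^ 2)

/-- The spectral norm of a real matrix: the supremum of `‖A v‖` over unit vectors. -/
noncomputable def specNormR {M N : ℕ} (A : Matrix (Fin M) (Fin N) ℝ) : ℝ :=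
  sSup {t : ℝ | ∃ v : Fin N → ℝ, enormR v = 1 ∧ t = enormR (A.mulVec v)}

/-- Irreducibility of a (nonnegative) square matrix. -/
def MatIrreducible (M : Matrix (Fin n) (Fin n) ℝ) : Prop :=
  ∀ i j, ∃ t : ℕ, 1 ≤ t ∧ 0 < (M ^ t) i j

/-! With `x = D^{1/2} 1_X` and `y = D^{1/2} 1_Y` one has `xᵀ M_D y = w(X,Y) - Vol(X) Vol(Y)`,
`‖x‖² = Vol(X)` and `‖y‖² = Vol(Y)`, so Cauchy–Schwarz together with `‖M_D y‖ ≤ ‖M_D‖ ‖y‖`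
gives `|w(X,Y) - Vol(X) Vol(Y)| ≤ ‖M_D‖ √(Vol(X) Vol(Y))`. -/

open Matrix

lemma enormR_nonneg {N : ℕ} (v : Fin N → ℝ) : 0 ≤ enormR v := Real.sqrt_nonneg _

lemma enormR_smul {N : ℕ} (c : ℝ) (v : Fin N → ℝ) : enormR (c • v) = |c| * enormR v := by
  simp only [enormR, Pi.smul_apply, smul_eq_mul, mul_pow, ← Finset.mul_sum]
  rw [Real.sqrt_mul (sq_nonneg c), Real.sqrt_sq_eq_abs]

lemma abs_dotProduct_le_enormR_mul {N : ℕ} (v w : Fin N → ℝ) :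
    |v ⬝ᵥ w| ≤ enormR v * enormR w := by
  rw [enormR, enormR, ← Real.sqrt_mul (Finset.sum_nonneg fun _ _ => sq_nonneg _),
    ← Real.sqrt_sq_eq_abs]
  exact Real.sqrt_le_sqrt (Finset.sum_mul_sq_le_sq_mul_sq _ _ _)

lemma specNormR_nonneg {M N : ℕ} (A : Matrix (Fin M) (Fin N) ℝ) : 0 ≤ specNormR A :=
  Real.sSup_nonneg fun _ ⟨_, _, ht⟩ => ht ▸ enormR_nonneg _

lemma enormR_mulVec_le_of_enormR_eq_one {M N : ℕ} (A : Matrix (Fin M) (Fin N) ℝ)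
    {v : Fin N → ℝ} (hv : enormR v = 1) : enormR (A *ᵥ v) ≤ specNormR A := by
  refine le_csSup ⟨Real.sqrt (∑ i, ∑ j, A i j ^ 2), ?_⟩ ⟨v, hv, rfl⟩
  rintro _ ⟨u, hu, rfl⟩
  have hu2 : ∑ j, u j ^ 2 = 1 := Real.sqrt_eq_one.1 hu
  refine Real.sqrt_le_sqrt (Finset.sum_le_sum fun i _ => ?_)
  calc (A *ᵥ u) i ^ 2 ≤ (∑ j, A i j ^ 2) * ∑ j, u j ^ 2 :=
      Finset.sum_mul_sq_le_sq_mul_sq Finset.univ (A i) u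
    _ = ∑ j, A i j ^ 2 := by rw [hu2, mul_one]

lemma enormR_mulVec_le {M N : ℕ} (A : Matrix (Fin M) (Fin N) ℝ) (v : Fin N → ℝ) :
    enormR (A *ᵥ v) ≤ specNormR A * enormR v := by
  rcases (enormR_nonneg v).eq_or_lt with hv | hv
  · have hv0 : v = 0 := by
      funext j
      have hsum : ∑ j, v j ^ 2 = 0 := by
        rwa [enormR, eq_comm, Real.sqrt_eq_zero (Finset.sum_nonneg fun _ _ => sq_nonneg _)] at hv
      exact pow_eq_zero_iff two_ne_zero |>.1 <|
        (Finset.sum_eq_zero_iff_of_nonneg fun i _ => sq_nonneg (v i)).1 hsum j (Finset.mem_univ j)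
    simp [hv0, enormR]
  · have hunit : enormR ((enormR v)⁻¹ • v) = 1 := by
      rw [enormR_smul, abs_of_pos (inv_pos.2 hv), inv_mul_cancel₀ hv.ne']
    have h := enormR_mulVec_le_of_enormR_eq_one A hunit
    rw [mulVec_smul, enormR_smul, abs_of_pos (inv_pos.2 hv), inv_mul_le_iff₀ hv] at h
    linarith

lemma abs_dotProduct_mulVec_le {M N : ℕ} (A : Matrix (Fin M) (Fin N) ℝ) (x : Fin M → ℝ)
    (y : Fin N → ℝ) : |x ⬝ᵥ (A *ᵥ y)| ≤ specNormR A * (enormR x * enormR y) :=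
  calc |x ⬝ᵥ (A *ᵥ y)| ≤ enormR x * enormR (A *ᵥ y) := abs_dotProduct_le_enormR_mul _ _
    _ ≤ enormR x * (specNormR A * enormR y) :=
        mul_le_mul_of_nonneg_left (enormR_mulVec_le A y) (enormR_nonneg x)
    _ = specNormR A * (enormR x * enormR y) := by ring

section Graph

variable (W : Matrix (Fin n) (Fin n) ℝ)

lemma vol_nonneg (hdeg : ∀ i, 0 ≤ deg W i) (X : Finset (Fin n)) : 0 ≤ vol W X :=
  Finset.sum_nonneg fun i _ => hdeg i

noncomputable def sqrtDegIndicator (X : Finset (Fin n)) : Fin n → ℝ :=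
  fun i => if i ∈ X then Real.sqrt (deg W i) else 0

lemma enormR_sqrtDegIndicator (hdeg : ∀ i, 0 ≤ deg W i) (X : Finset (Fin n)) :
    enormR (sqrtDegIndicator W X) = Real.sqrt (vol W X) := by
  have hsq : ∀ i, sqrtDegIndicator W X i ^ 2 = if i ∈ X then deg W i else 0 := fun i => by
    by_cases hi : i ∈ X <;> simp [sqrtDegIndicator, hi, Real.sq_sqrt (hdeg i)]
  simp only [enormR, hsq, Finset.sum_ite_mem, Finset.univ_inter, vol]

lemma MD_apply (i j : Fin n) :
    MD W i j = (W i j - deg W i * deg W j) / (Real.sqrt (deg W i) * Real.sqrt (deg W j)) := by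
  simp only [MD, mul_diagonal, diagonal_mul, Matrix.sub_apply, of_apply]
  field_simp

lemma cut_sub_vol_mul_vol (X Y : Finset (Fin n)) :
    cut W X Y - vol W X * vol W Y = ∑ i ∈ X, ∑ j ∈ Y, (W i j - deg W i * deg W j) := by
  simp only [cut, vol, Finset.sum_sub_distrib, Finset.sum_mul_sum]

lemma sqrtDegIndicator_dotProduct_MD_mulVec (hdeg : ∀ i, 0 < deg W i) (X Y : Finset (Fin n)) :
    sqrtDegIndicator W X ⬝ᵥ (MD W *ᵥ sqrtDegIndicator W Y) = cut W X Y - vol W X * vol W Y := by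
  have hterm : ∀ i j, sqrtDegIndicator W X i * (MD W i j * sqrtDegIndicator W Y j) =
      if i ∈ X then (if j ∈ Y then W i j - deg W i * deg W j else 0) else 0 := fun i j => by
    have hi := Real.sqrt_ne_zero'.2 (hdeg i)
    have hj := Real.sqrt_ne_zero'.2 (hdeg j)
    by_cases hiX : i ∈ X <;> by_cases hjY : j ∈ Y <;>
      simp only [sqrtDegIndicator, hiX, hjY, if_true, if_false, zero_mul, mul_zero]
    rw [MD_apply]
    field_simp
  rw [cut_sub_vol_mul_vol]
  simp only [dotProduct, mulVec, Finset.mul_sum, hterm, Finset.sum_ite_irrel, Finset.sum_ite_mem,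
    Finset.univ_inter, Finset.sum_const_zero]

end Graph

theorem expander_mixing_irregular_general
    (W : Matrix (Fin n) (Fin n) ℝ)
    (hdeg : ∀ i, 0 < deg W i) :
    disc1 W ≤ specNormR (MD W) := by
  refine Real.sSup_le ?_ (specNormR_nonneg _)
  rintro _ ⟨X, Y, rfl⟩
  refine div_le_of_le_mul₀ (Real.sqrt_nonneg _) (specNormR_nonneg _) ?_
  have hdeg' : ∀ i, 0 ≤ deg W i := fun i => (hdeg i).le
  calc |cut W X Y - vol W X * vol W Y|
      = |sqrtDegIndicator W X ⬝ᵥ (MD W *ᵥ sqrtDegIndicator W Y)| := by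
        rw [sqrtDegIndicator_dotProduct_MD_mulVec W hdeg]
    _ ≤ specNormR (MD W) * (Real.sqrt (vol W X) * Real.sqrt (vol W Y)) := by
        rw [← enormR_sqrtDegIndicator W hdeg', ← enormR_sqrtDegIndicator W hdeg']
        exact abs_dotProduct_mulVec_le _ _ _
    _ = specNormR (MD W) * Real.sqrt (vol W X * vol W Y) := by
        rw [Real.sqrt_mul (vol_nonneg W hdeg' X)]

/-- Expander mixing lemma for irregular graphs: for every edge-weighted undirected
graph `G = (V, W)` with irreducible weight matrix, `disc_1(G) ≤ ‖M_D‖`, where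
`‖M_D‖` is the spectral norm of the normalized modularity matrix. -/
theorem expander_mixing_irregular
    (W : Matrix (Fin n) (Fin n) ℝ)
    (hsymm : W.IsSymm)
    (hnonneg : ∀ i j, 0 ≤ W i j)
    (hdiag : ∀ i, W i i = 0)
    (hdeg : ∀ i, 0 < deg W i)
    (hsum : ∑ i, deg W i = 1)
    (hirr : MatIrreducible W) :
    disc1 W ≤ specNormR (MD W) :=
  expander_mixing_irregular_general W hdeg

end Stmt6
end

section
/- Let C be an m×n nonnegative matrix with entries summing to 1, R_1,…,R_k and C_1,…,C_k proper k-partitions of its rows and columns with discrepancy α = disc(C; R_1,…,R_k, C_1,…,C_k), and F = C − D_row R D_col the associated deviation matrix. Let ω, ω′ be complex numbers of modulus 1, and let x = Σ_{a=1}^k (1_{X_{a1}} + ω·1_{X_{a2}}) ∈ ℂᵐ where, for each a, X_{a1} and X_{a2} are disjoint subsets of R_a; similarly let y = Σ_{b=1}^k (1_{Y_{b1}} + ω′·1_{Y_{b2}}) ∈ ℂⁿ with Y_{b1}, Y_{b2} disjoint subsets of C_b. Then |⟨x, F y⟩| ≤ 2kα·√(⟨|x|, C 1_n⟩ · ⟨1_m,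 C |y|⟩), where |z| denotes the real vector of absolute values of the coordinates of z. -/
/-!
Expanding `x` and `y` in indicator vectors writes `⟨x, F y⟩` as a combination, with unimodular
coefficients, of the block sums `F(X, Y) = c(X, Y) - ρ(R_a, C_b) Vol(X) Vol(Y)` for
`X ∈ {X_{a1}, X_{a2}}` and `Y ∈ {Y_{b1}, Y_{b2}}`. Each of them is at most `α √(Vol(X) Vol(Y))`
by the definition of the discrepancy, so `|⟨x, F y⟩| ≤ α (∑ √Vol(X)) (∑ √Vol(Y))`, and
Cauchy–Schwarz over the `2k` sets on each side bounds this by `2kα √(∑ Vol(X) ∑ Vol(Y))`.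
Since the sets are pairwise disjoint and `|ω| = 1`, `∑ Vol(X) = ⟨|x|, C 1_n⟩`, and likewise for `y`.
-/

open scoped BigOperators

namespace Stmt8

variable {m n : ℕ}

/-- Row sums `d_{row,i}` of the table `C`. -/
noncomputable def rowSum (C : Matrix (Fin m) (Fin n) ℝ) (i : Fin m) : ℝ := ∑ j, C i j

/-- Column sums `d_{col,j}` of the table `C`. -/
noncomputable def colSum (C : Matrix (Fin m) (Fin n) ℝ) (j : Fin n) : ℝ := ∑ i, C i j

/-- The cut `c(X,Y)`. -/
noncomputable def cut (C : Matrix (Fin m) (Fin n) ℝ) (X : Finset (Fin m))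
    (Y : Finset (Fin n)) : ℝ := ∑ i ∈ X, ∑ j ∈ Y, C i j

/-- The volume of a row-subset. -/
noncomputable def volRow (C : Matrix (Fin m) (Fin n) ℝ) (X : Finset (Fin m)) : ℝ :=
  ∑ i ∈ X, rowSum C i

/-- The volume of a column-subset. -/
noncomputable def volCol (C : Matrix (Fin m) (Fin n) ℝ) (Y : Finset (Fin n)) : ℝ :=
  ∑ j ∈ Y, colSum C j

/-- The relative density `ρ(R_a, C_b)`. -/
noncomputable def rho (C : Matrix (Fin m) (Fin n) ℝ) (RA : Finset (Fin m))
    (CB : Finset (Fin n)) : ℝ :=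
  cut C RA CB / (volRow C RA * volCol C CB)

/-- A proper `k`-partition. -/
def IsProperPartition {N k : ℕ} (P : Fin k → Finset (Fin N)) : Prop :=
  (∀ a, (P a).Nonempty) ∧ (∀ a b, a ≠ b → Disjoint (P a) (P b)) ∧ (∀ i, ∃ a, i ∈ P a)

/-- The discrepancy of `C` in the given proper `k`-partitions. -/
noncomputable def discPart {k : ℕ} (C : Matrix (Fin m) (Fin n) ℝ)
    (R : Fin k → Finset (Fin m)) (Cc : Fin k → Finset (Fin n)) : ℝ :=
  sSup {t : ℝ | ∃ (a b : Fin k) (X : Finset (Fin m)) (Y : Finset (Fin n)),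
    X ⊆ R a ∧ Y ⊆ Cc b ∧
    t = |cut C X Y - rho C (R a) (Cc b) * volRow C X * volCol C Y| /
        Real.sqrt (volRow C X * volCol C Y)}

/-- The block matrix `R` whose entries over the block `R_a × C_b` all equal
`ρ(R_a, C_b)`. -/
noncomputable def Rblk {k : ℕ} (C : Matrix (Fin m) (Fin n) ℝ)
    (R : Fin k → Finset (Fin m)) (Cc : Fin k → Finset (Fin n)) :
    Matrix (Fin m) (Fin n) ℝ :=
  Matrix.of fun i j => ∑ a, ∑ b,
    if i ∈ R a ∧ j ∈ Cc b then rho C (R a) (Cc b) else 0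

/-- The deviation matrix `F = C - D_row R D_col`. -/
noncomputable def Fmat {k : ℕ} (C : Matrix (Fin m) (Fin n) ℝ)
    (R : Fin k → Finset (Fin m)) (Cc : Fin k → Finset (Fin n)) :
    Matrix (Fin m) (Fin n) ℝ :=
  C - Matrix.diagonal (rowSum C) * Rblk C R Cc * Matrix.diagonal (colSum C)

/-- The complex inner product `⟨x, y⟩ = ∑ conj(x_i) y_i`. -/
noncomputable def cinner {N : ℕ} (x y : Fin N → ℂ) : ℂ :=
  ∑ i, (starRingEnd ℂ) (x i) * y i

/-- The 0-1 indicator vector (as a complex vector) of an index set. -/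
noncomputable def indC {N : ℕ} (X : Finset (Fin N)) : Fin N → ℂ :=
  fun i => if i ∈ X then 1 else 0

open Function

section Volumes

variable (C : Matrix (Fin m) (Fin n) ℝ)

lemma volRow_nonneg (hrow : ∀ i, 0 ≤ rowSum C i) (X : Finset (Fin m)) : 0 ≤ volRow C X :=
  Finset.sum_nonneg fun i _ => hrow i

lemma volCol_nonneg (hcol : ∀ j, 0 ≤ colSum C j) (Y : Finset (Fin n)) : 0 ≤ volCol C Y :=
  Finset.sum_nonneg fun j _ => hcol j

lemma volRow_pos (hrow : ∀ i, 0 < rowSum C i) {X : Finset (Fin m)} (hX : X.Nonempty) :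
    0 < volRow C X :=
  Finset.sum_pos (fun i _ => hrow i) hX

lemma volCol_pos (hcol : ∀ j, 0 < colSum C j) {Y : Finset (Fin n)} (hY : Y.Nonempty) :
    0 < volCol C Y :=
  Finset.sum_pos (fun j _ => hcol j) hY

end Volumes

section Discrepancy

variable {k : ℕ} (C : Matrix (Fin m) (Fin n) ℝ) (R : Fin k → Finset (Fin m))
  (Cc : Fin k → Finset (Fin n))

lemma discPart_nonneg : 0 ≤ discPart C R Cc :=
  Real.sSup_nonneg <| by rintro t ⟨a, b, X, Y, -, -, rfl⟩; positivity

lemma div_sqrt_le_discPart {a b : Fin k} {X : Finset (Fin m)} {Y : Finset (Fin n)}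
    (hX : X ⊆ R a) (hY : Y ⊆ Cc b) :
    |cut C X Y - rho C (R a) (Cc b) * volRow C X * volCol C Y| /
      Real.sqrt (volRow C X * volCol C Y) ≤ discPart C R Cc := by
  let ratio : Fin k × Fin k × Finset (Fin m) × Finset (Fin n) → ℝ := fun ⟨a, b, X, Y⟩ =>
    |cut C X Y - rho C (R a) (Cc b) * volRow C X * volCol C Y| /
      Real.sqrt (volRow C X * volCol C Y)
  refine le_csSup ((Set.finite_range ratio).subset ?_).bddAbove ⟨a, b, X, Y, hX, hY, rfl⟩
  rintro t ⟨a, b, X, Y, -, -, rfl⟩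
  exact ⟨(a, b, X, Y), rfl⟩

lemma Rblk_apply_of_mem (hR : Pairwise (Disjoint on R)) (hCc : Pairwise (Disjoint on Cc))
    {a b : Fin k} {i : Fin m} {j : Fin n} (hi : i ∈ R a) (hj : j ∈ Cc b) :
    Rblk C R Cc i j = rho C (R a) (Cc b) := by
  have hi' : ∀ a' ≠ a, i ∉ R a' := fun a' ha' hi' =>
    Finset.disjoint_left.mp (hR ha') hi' hi
  have hj' : ∀ b' ≠ b, j ∉ Cc b' := fun b' hb' hj' =>
    Finset.disjoint_left.mp (hCc hb') hj' hj
  rw [Rblk, Matrix.of_apply, Fintype.sum_eq_single a fun a' ha' => by simp [hi' a' ha'],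
    Fintype.sum_eq_single b fun b' hb' => by simp [hj' b' hb']]
  simp [hi, hj]

lemma sum_sum_Fmat_of_subset (hR : Pairwise (Disjoint on R))
    (hCc : Pairwise (Disjoint on Cc)) {a b : Fin k} {X : Finset (Fin m)}
    {Y : Finset (Fin n)} (hX : X ⊆ R a) (hY : Y ⊆ Cc b) :
    ∑ i ∈ X, ∑ j ∈ Y, Fmat C R Cc i j =
      cut C X Y - rho C (R a) (Cc b) * volRow C X * volCol C Y := by
  have hF : ∀ i ∈ X, ∀ j ∈ Y, Fmat C R Cc i j =
      C i j - rowSum C i * rho C (R a) (Cc b) * colSum C j := by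
    intro i hi j hj
    simp only [Fmat, Matrix.sub_apply, Matrix.mul_diagonal, Matrix.diagonal_mul,
      Rblk_apply_of_mem C R Cc hR hCc (hX hi) (hY hj)]
  rw [Finset.sum_congr rfl fun i hi => Finset.sum_congr rfl (hF i hi)]
  rw [mul_assoc, volRow, volCol, Finset.sum_mul_sum, Finset.mul_sum, cut]
  simp only [Finset.sum_sub_distrib, Finset.mul_sum]
  congr! 3
  ring

lemma abs_sum_sum_Fmat_le (hrow : ∀ i, 0 < rowSum C i) (hcol : ∀ j, 0 < colSum C j)
    (hR : Pairwise (Disjoint on R)) (hCc : Pairwise (Disjoint on Cc)) {a b : Fin k}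
    {X : Finset (Fin m)} {Y : Finset (Fin n)} (hX : X ⊆ R a) (hY : Y ⊆ Cc b) :
    |∑ i ∈ X, ∑ j ∈ Y, Fmat C R Cc i j| ≤
      discPart C R Cc * (Real.sqrt (volRow C X) * Real.sqrt (volCol C Y)) := by
  rw [sum_sum_Fmat_of_subset C R Cc hR hCc hX hY]
  -- the ratio in `discPart` is junk (`_ / 0 = 0`) for empty `X` or `Y`
  rcases X.eq_empty_or_nonempty with rfl | hXne
  · simp [cut, volRow]
  rcases Y.eq_empty_or_nonempty with rfl | hYne
  · simp [cut, volCol]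
  have hpos : 0 < Real.sqrt (volRow C X * volCol C Y) :=
    Real.sqrt_pos.2 (mul_pos (volRow_pos C hrow hXne) (volCol_pos C hcol hYne))
  rw [← Real.sqrt_mul (volRow_nonneg C (fun i => (hrow i).le) X)]
  exact (div_le_iff₀ hpos).1 (div_sqrt_le_discPart C R Cc hX hY)

end Discrepancy

section IndicatorVectors

variable {ι κ : Type*} [Fintype ι] [Fintype κ]

lemma star_indC {N : ℕ} (X : Finset (Fin N)) : star (indC X) = indC X := by
  ext i; simp [indC, apply_ite]

lemma indC_dotProduct_mulVec_indC (M : Matrix (Fin m) (Fin n) ℝ) (X : Finset (Fin m))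
    (Y : Finset (Fin n)) :
    indC X ⬝ᵥ (M.map (fun r => (r : ℂ))).mulVec (indC Y) =
      ((∑ i ∈ X, ∑ j ∈ Y, M i j : ℝ) : ℂ) := by
  simp [dotProduct, Matrix.mulVec, indC, Finset.sum_ite_mem]

lemma cinner_sum_indC_mulVec_sum_indC (M : Matrix (Fin m) (Fin n) ℝ) (u : ι → ℂ)
    (X : ι → Finset (Fin m)) (v : κ → ℂ) (Y : κ → Finset (Fin n)) :
    cinner (fun i => ∑ p, u p * indC (X p) i)
        ((M.map (fun r => (r : ℂ))).mulVec fun j => ∑ q, v q * indC (Y q) j) =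
      ∑ p, ∑ q, (starRingEnd ℂ) (u p) * v q * ((∑ i ∈ X p, ∑ j ∈ Y q, M i j : ℝ) : ℂ) := by
  have hx : (fun i => ∑ p, u p * indC (X p) i) = ∑ p, u p • indC (X p) := by
    ext; simp [Finset.sum_apply]
  have hy : (fun j => ∑ q, v q * indC (Y q) j) = ∑ q, v q • indC (Y q) := by
    ext; simp [Finset.sum_apply]
  change star _ ⬝ᵥ _ = _
  simp only [hx, hy, star_sum, star_smul, star_indC, sum_dotProduct, smul_dotProduct,
    Matrix.mulVec_sum, Matrix.mulVec_smul, dotProduct_sum, dotProduct_smul,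
    indC_dotProduct_mulVec_indC, smul_eq_mul, Finset.mul_sum]
  rw [Finset.sum_comm]
  congr! 2
  rw [Complex.star_def]
  ring

lemma norm_sum_mul_indC {N : ℕ} (u : ι → ℂ) (hu : ∀ p, ‖u p‖ = 1) (X : ι → Finset (Fin N))
    (hX : Pairwise (Disjoint on X)) (i : Fin N) :
    ‖∑ p, u p * indC (X p) i‖ = ∑ p, if i ∈ X p then (1 : ℝ) else 0 := by
  by_cases h : ∃ p, i ∈ X p
  · obtain ⟨p, hp⟩ := h
    have hq : ∀ q ≠ p, i ∉ X q := fun q hqp hi => Finset.disjoint_left.mp (hX hqp) hi hp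
    rw [Fintype.sum_eq_single p fun q hqp => by simp [indC, hq q hqp],
      Fintype.sum_eq_single p fun q hqp => by simp [hq q hqp]]
    simp [indC, hp, hu]
  · simp [indC, not_exists.mp h]

lemma sum_norm_sum_mul_indC_mul {N : ℕ} (u : ι → ℂ) (hu : ∀ p, ‖u p‖ = 1)
    (X : ι → Finset (Fin N)) (hX : Pairwise (Disjoint on X)) (d : Fin N → ℝ) :
    ∑ i, ‖∑ p, u p * indC (X p) i‖ * d i = ∑ p, ∑ i ∈ X p, d i := by
  simp only [norm_sum_mul_indC u hu X hX, Finset.sum_mul, ite_mul, one_mul, zero_mul]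
  rw [Finset.sum_comm]
  simp [Finset.sum_ite_mem]

lemma sum_sqrt_le_sqrt_card_mul_sum (V : ι → ℝ) (hV : ∀ p, 0 ≤ V p) :
    ∑ p, Real.sqrt (V p) ≤ Real.sqrt (Fintype.card ι * ∑ p, V p) := by
  simpa [mul_comm] using Real.sum_sqrt_mul_sqrt_le Finset.univ hV fun _ => zero_le_one

lemma norm_cinner_mulVec_le (M : Matrix (Fin m) (Fin n) ℝ) (u : ι → ℂ) (hu : ∀ p, ‖u p‖ ≤ 1)
    (X : ι → Finset (Fin m)) (v : κ → ℂ) (hv : ∀ q, ‖v q‖ ≤ 1) (Y : κ → Finset (Fin n))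
    (V : ι → ℝ) (hV : ∀ p, 0 ≤ V p) (W : κ → ℝ) (hW : ∀ q, 0 ≤ W q) {α : ℝ} (hα : 0 ≤ α)
    (hM : ∀ p q, |∑ i ∈ X p, ∑ j ∈ Y q, M i j| ≤ α * (Real.sqrt (V p) * Real.sqrt (W q))) :
    ‖cinner (fun i => ∑ p, u p * indC (X p) i)
        ((M.map (fun r => (r : ℂ))).mulVec fun j => ∑ q, v q * indC (Y q) j)‖ ≤
      α * Real.sqrt (Fintype.card ι * Fintype.card κ) *
        Real.sqrt ((∑ p, V p) * ∑ q, W q) := by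
  rw [cinner_sum_indC_mulVec_sum_indC]
  calc _ ≤ ∑ p, ∑ q, α * (Real.sqrt (V p) * Real.sqrt (W q)) := by
        refine (norm_sum_le _ _).trans <| Finset.sum_le_sum fun p _ =>
          (norm_sum_le _ _).trans <| Finset.sum_le_sum fun q _ => ?_
        rw [norm_mul, norm_mul, Complex.norm_conj, Complex.norm_real, Real.norm_eq_abs]
        calc _ ≤ 1 * 1 * |∑ i ∈ X p, ∑ j ∈ Y q, M i j| := by gcongr; exacts [hu p, hv q]
          _ ≤ _ := by rw [one_mul, one_mul]; exact hM p q
    _ = α * ((∑ p, Real.sqrt (V p)) * ∑ q, Real.sqrt (W q)) := by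
        rw [Finset.sum_mul_sum, Finset.mul_sum]
        simp only [Finset.mul_sum]
    _ ≤ α * (Real.sqrt (Fintype.card ι * ∑ p, V p) * Real.sqrt (Fintype.card κ * ∑ q, W q)) := by
        gcongr
        exacts [sum_sqrt_le_sqrt_card_mul_sum V hV, sum_sqrt_le_sqrt_card_mul_sum W hW]
    _ = _ := by
        have hV' : 0 ≤ ∑ p, V p := Finset.sum_nonneg fun p _ => hV p
        rw [Real.sqrt_mul (by positivity), Real.sqrt_mul (by positivity), Real.sqrt_mul hV',
          Real.sqrt_mul (by positivity)]
        ring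

end IndicatorVectors

section SumElim

variable {ι β : Type*}

lemma sum_indC_add_mul_indC [Fintype ι] {N : ℕ} (X1 X2 : ι → Finset (Fin N)) (ω : ℂ)
    (i : Fin N) :
    ∑ a, (indC (X1 a) i + ω * indC (X2 a) i) =
      ∑ p, Sum.elim (fun _ => 1) (fun _ => ω) p * indC (Sum.elim X1 X2 p) i := by
  simp [Fintype.sum_sum_type, Finset.sum_add_distrib]

lemma norm_sumElim_one {ω : ℂ} (hω : ‖ω‖ = 1) (p : ι ⊕ ι) :
    ‖Sum.elim (fun _ => (1 : ℂ)) (fun _ => ω) p‖ = 1 := by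
  cases p <;> simp [hω]

lemma sumElim_subset {R : ι → Finset β} {X1 X2 : ι → Finset β} (h1 : ∀ a, X1 a ⊆ R a)
    (h2 : ∀ a, X2 a ⊆ R a) (p : ι ⊕ ι) : Sum.elim X1 X2 p ⊆ R (Sum.elim id id p) := by
  cases p; exacts [h1 _, h2 _]

lemma pairwise_disjoint_sumElim {R : ι → Finset β} (hR : Pairwise (Disjoint on R))
    {X1 X2 : ι → Finset β} (h1 : ∀ a, X1 a ⊆ R a) (h2 : ∀ a, X2 a ⊆ R a)
    (h12 : ∀ a, Disjoint (X1 a) (X2 a)) :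
    Pairwise (Disjoint on Sum.elim X1 X2) := by
  rintro (a | a) (b | b) hab
  · exact (hR (by simpa using hab)).mono (h1 a) (h1 b)
  · rcases eq_or_ne a b with rfl | hab'
    · exact h12 a
    · exact (hR hab').mono (h1 a) (h2 b)
  · rcases eq_or_ne a b with rfl | hab'
    · exact (h12 a).symm
    · exact (hR hab').mono (h2 a) (h1 b)
  · exact (hR (by simpa using hab)).mono (h2 a) (h2 b)

end SumElim

theorem inner_F_bound_general {k : ℕ}
    (C : Matrix (Fin m) (Fin n) ℝ)
    (hrow : ∀ i, 0 < rowSum C i)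
    (hcol : ∀ j, 0 < colSum C j)
    (R : Fin k → Finset (Fin m)) (Cc : Fin k → Finset (Fin n))
    (hR : IsProperPartition R) (hCc : IsProperPartition Cc)
    (α : ℝ) (hα : α = discPart C R Cc)
    (ω ω' : ℂ) (hω : ‖ω‖ = 1) (hω' : ‖ω'‖ = 1)
    (X1 X2 : Fin k → Finset (Fin m)) (Y1 Y2 : Fin k → Finset (Fin n))
    (hX1 : ∀ a, X1 a ⊆ R a) (hX2 : ∀ a, X2 a ⊆ R a)
    (hX12 : ∀ a, Disjoint (X1 a) (X2 a))
    (hY1 : ∀ b, Y1 b ⊆ Cc b) (hY2 : ∀ b, Y2 b ⊆ Cc b)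
    (hY12 : ∀ b, Disjoint (Y1 b) (Y2 b))
    (x : Fin m → ℂ) (hx : x = fun i => ∑ a, (indC (X1 a) i + ω * indC (X2 a) i))
    (y : Fin n → ℂ) (hy : y = fun j => ∑ b, (indC (Y1 b) j + ω' * indC (Y2 b) j)) :
    ‖cinner x (((Fmat C R Cc).map (fun r => (r : ℂ))).mulVec y)‖ ≤
      2 * k * α * Real.sqrt ((∑ i, ‖x i‖ * rowSum C i) *
        (∑ j, colSum C j * ‖y j‖)) := by
  subst hx hy hα
  simp_rw [sum_indC_add_mul_indC, mul_comm (colSum C _),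
    sum_norm_sum_mul_indC_mul _ (norm_sumElim_one hω) _
      (pairwise_disjoint_sumElim hR.2.1 hX1 hX2 hX12),
    sum_norm_sum_mul_indC_mul _ (norm_sumElim_one hω') _
      (pairwise_disjoint_sumElim hCc.2.1 hY1 hY2 hY12)]
  refine (norm_cinner_mulVec_le (Fmat C R Cc) _ (fun p => (norm_sumElim_one hω p).le) _
    _ (fun q => (norm_sumElim_one hω' q).le) _ (fun p => volRow C (Sum.elim X1 X2 p))
    (fun p => volRow_nonneg C (fun i => (hrow i).le) _) (fun q => volCol C (Sum.elim Y1 Y2 q))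
    (fun q => volCol_nonneg C (fun j => (hcol j).le) _) (discPart_nonneg C R Cc)
    fun p q => abs_sum_sum_Fmat_le C R Cc hrow hcol hR.2.1 hCc.2.1
      (sumElim_subset hX1 hX2 p) (sumElim_subset hY1 hY2 q)).trans_eq ?_
  rw [Fintype.card_sum, Fintype.card_fin, Real.sqrt_mul_self (by positivity)]
  push_cast [volRow, volCol]
  ring

/-- The key estimate (7) of the proof of the main theorem: with
`α = disc(C; R_1,…,R_k, C_1,…,C_k)`, `F = C - D_row R D_col`, unimodular `ω, ω'`,
`x = ∑_a (1_{X_{a1}} + ω 1_{X_{a2}})` and `y = ∑_b (1_{Y_{b1}} + ω' 1_{Y_{b2}})`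
(with `X_{a1}, X_{a2}` disjoint subsets of `R_a` and `Y_{b1}, Y_{b2}` disjoint
subsets of `C_b`), one has
`|⟨x, F y⟩| ≤ 2kα √(⟨|x|, C 1_n⟩ ⟨1_m, C |y|⟩)`. -/
theorem inner_F_bound {k : ℕ}
    (C : Matrix (Fin m) (Fin n) ℝ)
    (hnonneg : ∀ i j, 0 ≤ C i j)
    (hsum : ∑ i, ∑ j, C i j = 1)
    (hrow : ∀ i, 0 < rowSum C i)
    (hcol : ∀ j, 0 < colSum C j)
    (R : Fin k → Finset (Fin m)) (Cc : Fin k → Finset (Fin n))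
    (hR : IsProperPartition R) (hCc : IsProperPartition Cc)
    (α : ℝ) (hα : α = discPart C R Cc)
    (ω ω' : ℂ) (hω : ‖ω‖ = 1) (hω' : ‖ω'‖ = 1)
    (X1 X2 : Fin k → Finset (Fin m)) (Y1 Y2 : Fin k → Finset (Fin n))
    (hX1 : ∀ a, X1 a ⊆ R a) (hX2 : ∀ a, X2 a ⊆ R a)
    (hX12 : ∀ a, Disjoint (X1 a) (X2 a))
    (hY1 : ∀ b, Y1 b ⊆ Cc b) (hY2 : ∀ b, Y2 b ⊆ Cc b)
    (hY12 : ∀ b, Disjoint (Y1 b) (Y2 b))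
    (x : Fin m → ℂ) (hx : x = fun i => ∑ a, (indC (X1 a) i + ω * indC (X2 a) i))
    (y : Fin n → ℂ) (hy : y = fun j => ∑ b, (indC (Y1 b) j + ω' * indC (Y2 b) j)) :
    ‖cinner x (((Fmat C R Cc).map (fun r => (r : ℂ))).mulVec y)‖ ≤
      2 * k * α * Real.sqrt ((∑ i, ‖x i‖ * rowSum C i) *
        (∑ j, colSum C j * ‖y j‖)) :=
  inner_F_bound_general C hrow hcol R Cc hR hCc α hα ω ω' hω hω' X1 X2 Y1 Y2 hX1 hX2 hX12 hY1 hY2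
    hY12 x hx y hy

end Stmt8
end

section
/- Let C be an m×n nonnegative matrix with entries summing to 1, R_1,…,R_k and C_1,…,C_k proper k-partitions of its rows and columns, and F = C − D_row R D_col the associated deviation matrix. Let x ∈ ℂᵐ be any vector and {y^{(ℓ)}} a finite family of vectors in ℂⁿ such that each |y^{(ℓ)}| is a 0-1 vector and the supports of the y^{(ℓ)} are pairwise disjoint. Then Σ_ℓ |⟨x, F y^{(ℓ)}⟩| ≤ 2·⟨|x|, C 1_n⟩, where |z| denotes the real vector of absolute values of the coordinates of z. -/
/-!
Entrywise `|F| ≤ C + D_row R D_col`, and for `i ∈ R_a` the row of `D_row R D_col` sums to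
`d_{row,i} · Σ_b c(R_a, C_b) / Vol(R_a) ≤ d_{row,i}`; so every row of `|F|` sums to at most
`2 d_{row,i}`. Since the `y^{(ℓ)}` have disjoint supports and entries of modulus at most one,
`Σ_ℓ |y^{(ℓ)}_j| ≤ 1` for every `j`, and the triangle inequality gives
`Σ_ℓ |⟨x, F y^{(ℓ)}⟩| ≤ Σ_i |x_i| Σ_j |F_ij| ≤ 2 Σ_i |x_i| d_{row,i}`.
-/

open scoped BigOperators

namespace Stmt9

variable {m n : ℕ}

/-- Row sums `d_{row,i}` of the table `C`. -/
noncomputable def rowSum (C : Matrix (Fin m) (Fin n) ℝ) (i : Fin m) : ℝ := ∑ j, C i j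

/-- Column sums `d_{col,j}` of the table `C`. -/
noncomputable def colSum (C : Matrix (Fin m) (Fin n) ℝ) (j : Fin n) : ℝ := ∑ i, C i j

/-- The cut `c(X,Y)`. -/
noncomputable def cut (C : Matrix (Fin m) (Fin n) ℝ) (X : Finset (Fin m))
    (Y : Finset (Fin n)) : ℝ := ∑ i ∈ X, ∑ j ∈ Y, C i j

/-- The volume of a row-subset. -/
noncomputable def volRow (C : Matrix (Fin m) (Fin n) ℝ) (X : Finset (Fin m)) : ℝ :=
  ∑ i ∈ X, rowSum C i

/-- The volume of a column-subset. -/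
noncomputable def volCol (C : Matrix (Fin m) (Fin n) ℝ) (Y : Finset (Fin n)) : ℝ :=
  ∑ j ∈ Y, colSum C j

/-- The relative density `ρ(R_a, C_b)`. -/
noncomputable def rho (C : Matrix (Fin m) (Fin n) ℝ) (RA : Finset (Fin m))
    (CB : Finset (Fin n)) : ℝ :=
  cut C RA CB / (volRow C RA * volCol C CB)

/-- A proper `k`-partition. -/
def IsProperPartition {N k : ℕ} (P : Fin k → Finset (Fin N)) : Prop :=
  (∀ a, (P a).Nonempty) ∧ (∀ a b, a ≠ b → Disjoint (P a) (P b)) ∧ (∀ i, ∃ a, i ∈ P a)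

/-- The discrepancy of `C` in the given proper `k`-partitions. -/
noncomputable def discPart {k : ℕ} (C : Matrix (Fin m) (Fin n) ℝ)
    (R : Fin k → Finset (Fin m)) (Cc : Fin k → Finset (Fin n)) : ℝ :=
  sSup {t : ℝ | ∃ (a b : Fin k) (X : Finset (Fin m)) (Y : Finset (Fin n)),
    X ⊆ R a ∧ Y ⊆ Cc b ∧
    t = |cut C X Y - rho C (R a) (Cc b) * volRow C X * volCol C Y| /
        Real.sqrt (volRow C X * volCol C Y)}

/-- The block matrix `R` whose entries over the block `R_a × C_b` all equal
`ρ(R_a, C_b)`. -/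
noncomputable def Rblk {k : ℕ} (C : Matrix (Fin m) (Fin n) ℝ)
    (R : Fin k → Finset (Fin m)) (Cc : Fin k → Finset (Fin n)) :
    Matrix (Fin m) (Fin n) ℝ :=
  Matrix.of fun i j => ∑ a, ∑ b,
    if i ∈ R a ∧ j ∈ Cc b then rho C (R a) (Cc b) else 0

/-- The deviation matrix `F = C - D_row R D_col`. -/
noncomputable def Fmat {k : ℕ} (C : Matrix (Fin m) (Fin n) ℝ)
    (R : Fin k → Finset (Fin m)) (Cc : Fin k → Finset (Fin n)) :
    Matrix (Fin m) (Fin n) ℝ :=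
  C - Matrix.diagonal (rowSum C) * Rblk C R Cc * Matrix.diagonal (colSum C)

/-- The complex inner product `⟨x, y⟩ = ∑ conj(x_i) y_i`. -/
noncomputable def cinner {N : ℕ} (x y : Fin N → ℂ) : ℂ :=
  ∑ i, (starRingEnd ℂ) (x i) * y i

/-- The 0-1 indicator vector (as a complex vector) of an index set. -/
noncomputable def indC {N : ℕ} (X : Finset (Fin N)) : Fin N → ℂ :=
  fun i => if i ∈ X then 1 else 0

theorem sum_le_of_pairwise_eq_zero_or_eq_zero {ι M : Type*} [Fintype ι] [AddCommMonoid M]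
    [Preorder M] {f : ι → M} {c : M} (hc : 0 ≤ c) (hf : ∀ l, f l ≤ c)
    (hdisj : ∀ l l', l ≠ l' → f l = 0 ∨ f l' = 0) : ∑ l, f l ≤ c := by
  by_cases h : ∃ l₀, f l₀ ≠ 0
  · obtain ⟨l₀, hl₀⟩ := h
    rw [Finset.sum_eq_single l₀ (fun l _ hl => (hdisj l l₀ hl).resolve_right hl₀)
      (fun h => absurd (Finset.mem_univ l₀) h)]
    exact hf l₀
  · push Not at h
    simpa [h] using hc

theorem norm_cinner_le {N : ℕ} (x v : Fin N → ℂ) : ‖cinner x v‖ ≤ ∑ i, ‖x i‖ * ‖v i‖ :=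
  (norm_sum_le _ _).trans_eq (by simp)

theorem norm_map_ofReal_mulVec_apply_le (M : Matrix (Fin m) (Fin n) ℝ) (v : Fin n → ℂ)
    (i : Fin m) : ‖(M.map (fun r => (r : ℂ))).mulVec v i‖ ≤ ∑ j, |M i j| * ‖v j‖ := by
  simp only [Matrix.mulVec, dotProduct, Matrix.map_apply]
  exact (norm_sum_le _ _).trans_eq (by simp)

theorem sum_norm_cinner_map_ofReal_mulVec_le {ι : Type*} [Fintype ι]
    (M : Matrix (Fin m) (Fin n) ℝ) (x : Fin m → ℂ) (y : ι → Fin n → ℂ)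
    (hy : ∀ j, ∑ l, ‖y l j‖ ≤ 1) :
    ∑ l, ‖cinner x ((M.map (fun r => (r : ℂ))).mulVec (y l))‖ ≤ ∑ i, ‖x i‖ * ∑ j, |M i j| :=
  calc ∑ l, ‖cinner x ((M.map (fun r => (r : ℂ))).mulVec (y l))‖
      ≤ ∑ l, ∑ i, ‖x i‖ * ∑ j, |M i j| * ‖y l j‖ := by
        refine Finset.sum_le_sum fun l _ => (norm_cinner_le _ _).trans ?_
        gcongr with i
        exact norm_map_ofReal_mulVec_apply_le M (y l) i
    _ = ∑ i, ‖x i‖ * ∑ j, |M i j| * ∑ l, ‖y l j‖ := by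
        simp only [Finset.mul_sum]
        rw [Finset.sum_comm]
        exact Finset.sum_congr rfl fun i _ => Finset.sum_comm
    _ ≤ ∑ i, ‖x i‖ * ∑ j, |M i j| := by
        gcongr with i _ j
        exact mul_le_of_le_one_right (abs_nonneg _) (hy j)

section Blocks

variable {k : ℕ} {C : Matrix (Fin m) (Fin n) ℝ}

theorem rowSum_nonneg (hC : ∀ i j, 0 ≤ C i j) (i : Fin m) : 0 ≤ rowSum C i :=
  Finset.sum_nonneg fun j _ => hC i j

theorem colSum_nonneg (hC : ∀ i j, 0 ≤ C i j) (j : Fin n) : 0 ≤ colSum C j :=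
  Finset.sum_nonneg fun i _ => hC i j

theorem cut_nonneg (hC : ∀ i j, 0 ≤ C i j) (X : Finset (Fin m)) (Y : Finset (Fin n)) :
    0 ≤ cut C X Y :=
  Finset.sum_nonneg fun i _ => Finset.sum_nonneg fun j _ => hC i j

theorem volRow_nonneg (hC : ∀ i j, 0 ≤ C i j) (X : Finset (Fin m)) : 0 ≤ volRow C X :=
  Finset.sum_nonneg fun i (_ : i ∈ X) => rowSum_nonneg hC i

theorem volCol_nonneg (hC : ∀ i j, 0 ≤ C i j) (Y : Finset (Fin n)) : 0 ≤ volCol C Y :=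
  Finset.sum_nonneg fun j (_ : j ∈ Y) => colSum_nonneg hC j

theorem rho_nonneg (hC : ∀ i j, 0 ≤ C i j) (X : Finset (Fin m)) (Y : Finset (Fin n)) :
    0 ≤ rho C X Y :=
  div_nonneg (cut_nonneg hC X Y) (mul_nonneg (volRow_nonneg hC X) (volCol_nonneg hC Y))

theorem Rblk_nonneg (hC : ∀ i j, 0 ≤ C i j) (R : Fin k → Finset (Fin m))
    (Cc : Fin k → Finset (Fin n)) (i : Fin m) (j : Fin n) : 0 ≤ Rblk C R Cc i j := by
  rw [Rblk, Matrix.of_apply]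
  refine Finset.sum_nonneg fun a _ => Finset.sum_nonneg fun b _ => ?_
  split_ifs
  exacts [rho_nonneg hC _ _, le_rfl]

theorem sum_Rblk_mul_colSum (R : Fin k → Finset (Fin m)) (Cc : Fin k → Finset (Fin n))
    (i : Fin m) :
    ∑ j, Rblk C R Cc i j * colSum C j =
      ∑ a, if i ∈ R a then ∑ b, rho C (R a) (Cc b) * volCol C (Cc b) else 0 := by
  simp only [Rblk, Matrix.of_apply, Finset.sum_mul, volCol, Finset.mul_sum, ite_and]
  rw [Finset.sum_comm]
  refine Finset.sum_congr rfl fun a _ => ?_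
  rw [Finset.sum_comm]
  split_ifs
  · simp [Finset.sum_ite_mem]
  · simp

-- Division by zero returning zero makes this hold without any positivity of the volumes.
theorem rho_mul_volCol_le (hC : ∀ i j, 0 ≤ C i j) (X : Finset (Fin m)) (Y : Finset (Fin n)) :
    rho C X Y * volCol C Y ≤ cut C X Y / volRow C X := by
  obtain hY | hY := eq_or_ne (volCol C Y) 0
  · rw [hY, mul_zero]
    exact div_nonneg (cut_nonneg hC X Y) (volRow_nonneg hC X)
  · rw [rho, ← div_div, div_mul_cancel₀ _ hY]

theorem sum_cut_le_volRow (hC : ∀ i j, 0 ≤ C i j) {Cc : Fin k → Finset (Fin n)}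
    (hCc : ∀ a b, a ≠ b → Disjoint (Cc a) (Cc b)) (X : Finset (Fin m)) :
    ∑ b, cut C X (Cc b) ≤ volRow C X := by
  unfold cut volRow rowSum
  rw [Finset.sum_comm]
  refine Finset.sum_le_sum fun i _ => ?_
  rw [← Finset.sum_biUnion fun a _ b _ hab => hCc a b hab]
  exact Finset.sum_le_univ_sum_of_nonneg fun j => hC i j

theorem sum_rho_mul_volCol_le_one (hC : ∀ i j, 0 ≤ C i j) {Cc : Fin k → Finset (Fin n)}
    (hCc : ∀ a b, a ≠ b → Disjoint (Cc a) (Cc b)) (X : Finset (Fin m)) :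
    ∑ b, rho C X (Cc b) * volCol C (Cc b) ≤ 1 :=
  calc ∑ b, rho C X (Cc b) * volCol C (Cc b)
      ≤ ∑ b, cut C X (Cc b) / volRow C X :=
        Finset.sum_le_sum fun b _ => rho_mul_volCol_le hC X (Cc b)
    _ = (∑ b, cut C X (Cc b)) / volRow C X := (Finset.sum_div _ _ _).symm
    _ ≤ volRow C X / volRow C X := by
        gcongr
        · exact volRow_nonneg hC X
        · exact sum_cut_le_volRow hC hCc X
    _ ≤ 1 := div_self_le_one _

theorem sum_Rblk_mul_colSum_le_one (hC : ∀ i j, 0 ≤ C i j) {R : Fin k → Finset (Fin m)}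
    {Cc : Fin k → Finset (Fin n)} (hR : ∀ a b, a ≠ b → Disjoint (R a) (R b))
    (hCc : ∀ a b, a ≠ b → Disjoint (Cc a) (Cc b)) (i : Fin m) :
    ∑ j, Rblk C R Cc i j * colSum C j ≤ 1 := by
  rw [sum_Rblk_mul_colSum]
  refine sum_le_of_pairwise_eq_zero_or_eq_zero zero_le_one (fun a => ?_) fun a a' ha => ?_
  · split_ifs
    exacts [sum_rho_mul_volCol_le_one hC hCc (R a), zero_le_one]
  · by_cases hia : i ∈ R a
    · exact .inr (if_neg (Finset.disjoint_left.mp (hR a a' ha) hia))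
    · exact .inl (if_neg hia)

theorem Fmat_apply (R : Fin k → Finset (Fin m)) (Cc : Fin k → Finset (Fin n)) (i : Fin m)
    (j : Fin n) : Fmat C R Cc i j = C i j - rowSum C i * Rblk C R Cc i j * colSum C j := by
  simp [Fmat, Matrix.mul_diagonal, Matrix.diagonal_mul]

theorem sum_abs_Fmat_le (hC : ∀ i j, 0 ≤ C i j) {R : Fin k → Finset (Fin m)}
    {Cc : Fin k → Finset (Fin n)} (hR : ∀ a b, a ≠ b → Disjoint (R a) (R b))
    (hCc : ∀ a b, a ≠ b → Disjoint (Cc a) (Cc b)) (i : Fin m) :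
    ∑ j, |Fmat C R Cc i j| ≤ 2 * rowSum C i := by
  have hentry : ∀ j, |Fmat C R Cc i j| ≤ C i j + rowSum C i * (Rblk C R Cc i j * colSum C j) := by
    intro j
    have hblock : 0 ≤ rowSum C i * (Rblk C R Cc i j * colSum C j) :=
      mul_nonneg (rowSum_nonneg hC i) (mul_nonneg (Rblk_nonneg hC R Cc i j) (colSum_nonneg hC j))
    rw [Fmat_apply, abs_le]
    constructor <;> linarith [hC i j]
  calc ∑ j, |Fmat C R Cc i j|
      ≤ ∑ j, (C i j + rowSum C i * (Rblk C R Cc i j * colSum C j)) :=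
        Finset.sum_le_sum fun j _ => hentry j
    _ = rowSum C i + rowSum C i * ∑ j, Rblk C R Cc i j * colSum C j := by
        rw [Finset.sum_add_distrib, ← Finset.mul_sum, rowSum]
    _ ≤ rowSum C i + rowSum C i * 1 := by
        gcongr
        exacts [rowSum_nonneg hC i, sum_Rblk_mul_colSum_le_one hC hR hCc i]
    _ = 2 * rowSum C i := by ring

end Blocks

theorem sum_inner_F_bound_general {k : ℕ} {ι : Type*} [Fintype ι]
    (C : Matrix (Fin m) (Fin n) ℝ)
    (hnonneg : ∀ i j, 0 ≤ C i j)
    (R : Fin k → Finset (Fin m)) (Cc : Fin k → Finset (Fin n))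
    (hR : IsProperPartition R) (hCc : IsProperPartition Cc)
    (x : Fin m → ℂ) (y : ι → Fin n → ℂ)
    (hy01 : ∀ l j, ‖y l j‖ = 0 ∨ ‖y l j‖ = 1)
    (hdisj : ∀ l l', l ≠ l' → ∀ j, y l j = 0 ∨ y l' j = 0) :
    ∑ l, ‖cinner x (((Fmat C R Cc).map (fun r => (r : ℂ))).mulVec (y l))‖
      ≤ 2 * ∑ i, ‖x i‖ * rowSum C i := by
  have hy : ∀ j, ∑ l, ‖y l j‖ ≤ 1 := fun j =>
    sum_le_of_pairwise_eq_zero_or_eq_zero zero_le_one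
      (fun l => (hy01 l j).elim (fun h => h.trans_le zero_le_one) le_of_eq)
      fun l l' hl => (hdisj l l' hl j).imp (by simp [·]) (by simp [·])
  calc ∑ l, ‖cinner x (((Fmat C R Cc).map (fun r => (r : ℂ))).mulVec (y l))‖
      ≤ ∑ i, ‖x i‖ * ∑ j, |Fmat C R Cc i j| := sum_norm_cinner_map_ofReal_mulVec_le _ x y hy
    _ ≤ ∑ i, ‖x i‖ * (2 * rowSum C i) := by
        gcongr with i
        exact sum_abs_Fmat_le hnonneg hR.2.1 hCc.2.1 i
    _ = 2 * ∑ i, ‖x i‖ * rowSum C i := by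
        rw [Finset.mul_sum]
        exact Finset.sum_congr rfl fun i _ => by ring

/-- Inequality (8) of the proof of the main theorem: for `F = C - D_row R D_col`,
any `x ∈ ℂᵐ` and any finite family `y^{(ℓ)}` of vectors in `ℂⁿ` such that each
`|y^{(ℓ)}|` is a 0-1 vector and the supports of the `y^{(ℓ)}` are pairwise
disjoint, one has `∑_ℓ |⟨x, F y^{(ℓ)}⟩| ≤ 2 ⟨|x|, C 1_n⟩`. -/
theorem sum_inner_F_bound {k : ℕ} {ι : Type*} [Fintype ι]
    (C : Matrix (Fin m) (Fin n) ℝ)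
    (hnonneg : ∀ i j, 0 ≤ C i j)
    (hsum : ∑ i, ∑ j, C i j = 1)
    (hrow : ∀ i, 0 < rowSum C i)
    (hcol : ∀ j, 0 < colSum C j)
    (R : Fin k → Finset (Fin m)) (Cc : Fin k → Finset (Fin n))
    (hR : IsProperPartition R) (hCc : IsProperPartition Cc)
    (x : Fin m → ℂ) (y : ι → Fin n → ℂ)
    (hy01 : ∀ l j, ‖y l j‖ = 0 ∨ ‖y l j‖ = 1)
    (hdisj : ∀ l l', l ≠ l' → ∀ j, y l j = 0 ∨ y l' j = 0) :
    ∑ l, ‖cinner x (((Fmat C R Cc).map (fun r => (r : ℂ))).mulVec (y l))‖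
      ≤ 2 * ∑ i, ‖x i‖ * rowSum C i :=
  sum_inner_F_bound_general C hnonneg R Cc hR hCc x y hy01 hdisj

end Stmt9
end

section
/- For every non-decomposable contingency table C and integer 1 ≤ k ≤ rk(C), if disc_k(C) = 0 then s_k = 0, where s_k is the k-th largest nontrivial singular value of the normalized table C_nor = D_row^{-1/2} C D_col^{-1/2}. -/
open scoped BigOperators Matrix

namespace Stmt14

variable {m n : ℕ}

/-- Row sums `d_{row,i}` of the table `C`. -/
noncomputable def rowSum (C : Matrix (Fin m) (Fin n) ℝ) (i : Fin m) : ℝ := ∑ j, C i j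

/-- Column sums `d_{col,j}` of the table `C`. -/
noncomputable def colSum (C : Matrix (Fin m) (Fin n) ℝ) (j : Fin n) : ℝ := ∑ i, C i j

/-- The cut `c(X,Y)` between a row-subset `X` and a column-subset `Y`. -/
noncomputable def cut (C : Matrix (Fin m) (Fin n) ℝ) (X : Finset (Fin m))
    (Y : Finset (Fin n)) : ℝ := ∑ i ∈ X, ∑ j ∈ Y, C i j

/-- The volume `Vol(X)` of a row-subset. -/
noncomputable def volRow (C : Matrix (Fin m) (Fin n) ℝ) (X : Finset (Fin m)) : ℝ :=
  ∑ i ∈ X, rowSum C i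

/-- The volume `Vol(Y)` of a column-subset. -/
noncomputable def volCol (C : Matrix (Fin m) (Fin n) ℝ) (Y : Finset (Fin n)) : ℝ :=
  ∑ j ∈ Y, colSum C j

/-- The relative density `ρ(R_a, C_b)`. -/
noncomputable def rho (C : Matrix (Fin m) (Fin n) ℝ) (RA : Finset (Fin m))
    (CB : Finset (Fin n)) : ℝ :=
  cut C RA CB / (volRow C RA * volCol C CB)

/-- A proper `k`-partition: nonempty parts, pairwise disjoint, covering everything. -/
def IsProperPartition {N k : ℕ} (P : Fin k → Finset (Fin N)) : Prop :=
  (∀ a, (P a).Nonempty) ∧ (∀ a b, a ≠ b → Disjoint (P a) (P b)) ∧ (∀ i, ∃ a, i ∈ P a)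

/-- The discrepancy `disc(C; R_1,…,R_k, C_1,…,C_k)` of `C` in the given
proper `k`-partitions of its rows and columns. -/
noncomputable def discPart {k : ℕ} (C : Matrix (Fin m) (Fin n) ℝ)
    (R : Fin k → Finset (Fin m)) (Cc : Fin k → Finset (Fin n)) : ℝ :=
  sSup {t : ℝ | ∃ (a b : Fin k) (X : Finset (Fin m)) (Y : Finset (Fin n)),
    X ⊆ R a ∧ Y ⊆ Cc b ∧
    t = |cut C X Y - rho C (R a) (Cc b) * volRow C X * volCol C Y| /
        Real.sqrt (volRow C X * volCol C Y)}

/-- The minimum `k`-way discrepancy `disc_k(C)`. -/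
noncomputable def disck (C : Matrix (Fin m) (Fin n) ℝ) (k : ℕ) : ℝ :=
  sInf {t : ℝ | ∃ (R : Fin k → Finset (Fin m)) (Cc : Fin k → Finset (Fin n)),
    IsProperPartition R ∧ IsProperPartition Cc ∧ t = discPart C R Cc}

/-- The normalized table `C_nor = D_row^{-1/2} C D_col^{-1/2}`. -/
noncomputable def Cnor (C : Matrix (Fin m) (Fin n) ℝ) : Matrix (Fin m) (Fin n) ℝ :=
  Matrix.diagonal (fun i => (Real.sqrt (rowSum C i))⁻¹) * C *
    Matrix.diagonal (fun j => (Real.sqrt (colSum C j))⁻¹)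

/-- The (unsorted) singular values of a matrix, i.e. the square roots of the
eigenvalues of `Aᴴ A`. -/
noncomputable def svFin (A : Matrix (Fin m) (Fin n) ℝ) : Fin n → ℝ :=
  fun i => Real.sqrt ((Matrix.isHermitian_conjTranspose_mul_self A).eigenvalues i)

/-- `sval A k` is the `(k+1)`-th largest singular value of `A`
(0-indexed: `sval A 0` is the largest); it is `0` when `k ≥ n`. -/
noncomputable def sval (A : Matrix (Fin m) (Fin n) ℝ) (k : ℕ) : ℝ :=
  if h : k < n then svFin A (Tuple.sort (svFin A) (Fin.rev ⟨k, h⟩)) else 0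

/-- Irreducibility of a (nonnegative) square matrix. -/
def MatIrreducible {N : ℕ} (M : Matrix (Fin N) (Fin N) ℝ) : Prop :=
  ∀ i j, ∃ t : ℕ, 1 ≤ t ∧ 0 < (M ^ t) i j

/-!
On the singleton pairs `X = {i} ⊆ R_a`, `Y = {j} ⊆ C_b`, zero discrepancy says
`c_ij = ρ(R_a, C_b) d_{row,i} d_{col,j}`. So row `i` of `C` is `d_{row,i}` times a row vector
depending only on the part `R_a` containing `i`, and `rk C ≤ k`. Rescaling rows and columns does not
raise the rank, so `C_nor` has at most `k` nonzero singular values and `s_k = 0`.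
-/

lemma apply_sort_rev_le_of_card_filter_le {α : Type*} [LinearOrder α] {k : ℕ} (f : Fin n → α)
    (a : α) (hk : k < n) (hcard : (Finset.univ.filter fun i => a < f i).card ≤ k) :
    f (Tuple.sort f (Fin.rev ⟨k, hk⟩)) ≤ a := by
  by_contra! hlt
  have hsub : (Finset.Ici (Fin.rev ⟨k, hk⟩)).image (Tuple.sort f) ⊆
      Finset.univ.filter fun i => a < f i := by
    simp only [Finset.subset_iff, Finset.mem_image, Finset.mem_Ici, Finset.mem_filter,
      Finset.mem_univ, true_and]
    rintro _ ⟨y, hy, rfl⟩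
    exact hlt.trans_le (Tuple.monotone_sort f hy)
  have h := Finset.card_le_card hsub
  rw [Finset.card_image_of_injective _ (Tuple.sort f).injective, Fin.card_Ici, Fin.val_rev] at h
  simp only at h
  omega

lemma sval_eq_zero_of_rank_le (A : Matrix (Fin m) (Fin n) ℝ) {k : ℕ} (hk : A.rank ≤ k) :
    sval A k = 0 := by
  unfold sval
  split_ifs with hkn
  · have hH := Matrix.isHermitian_conjTranspose_mul_self A
    have hcard : (Finset.univ.filter fun i => 0 < svFin A i).card ≤ k := calc
      _ ≤ Fintype.card {i // hH.eigenvalues i ≠ 0} := by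
          rw [Fintype.card_subtype]
          refine Finset.card_le_card fun i => ?_
          simp only [svFin, Finset.mem_filter, Finset.mem_univ, true_and, Real.sqrt_pos]
          exact ne_of_gt
      _ = A.rank := by rw [← hH.rank_eq_card_non_zero_eigs, Matrix.rank_conjTranspose_mul_self]
      _ ≤ k := hk
    exact le_antisymm (apply_sort_rev_le_of_card_filter_le _ 0 hkn hcard) (Real.sqrt_nonneg _)
  · rfl

lemma _root_.Matrix.rank_le_card_of_apply_eq_mul {ι κ β R : Type*} [Fintype ι] [Fintype κ]
    [Fintype β] [DecidableEq β] [CommRing R] [StrongRankCondition R] {A : Matrix ι κ R}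
    (a : ι → β) (u : ι → R) (F : Matrix β κ R) (h : ∀ i j, A i j = u i * F (a i) j) :
    A.rank ≤ Fintype.card β := by
  have hA : A = Matrix.of (fun i c => if a i = c then u i else 0) * F := by
    ext i j
    simp [Matrix.mul_apply, ite_mul, h]
  rw [hA]
  exact (Matrix.rank_mul_le_left _ _).trans (Matrix.rank_le_card_width _)

lemma rank_Cnor_le (C : Matrix (Fin m) (Fin n) ℝ) : (Cnor C).rank ≤ C.rank :=
  (Matrix.rank_mul_le_left _ _).trans (Matrix.rank_mul_le_right _ _)

lemma exists_isProperPartition {N k : ℕ} (hk1 : 1 ≤ k) (hkN : k ≤ N) :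
    ∃ P : Fin k → Finset (Fin N), IsProperPartition P := by
  refine ⟨fun a => Finset.univ.filter
      (fun i => (⟨min i.val (k-1), by omega⟩ : Fin k) = a), ?_, ?_, ?_⟩
  · intro a
    refine ⟨⟨a.val, by omega⟩, ?_⟩
    simp only [Finset.mem_filter, Finset.mem_univ, true_and, Fin.ext_iff]
    omega
  · intro a b hab
    rw [Finset.disjoint_left]
    intro i hi hib
    simp only [Finset.mem_filter, Finset.mem_univ, true_and] at hi hib
    exact hab (hi.symm.trans hib)
  · intro i
    exact ⟨⟨min i.val (k-1), by omega⟩, by simp⟩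

lemma exists_discPart_eq_disck (C : Matrix (Fin m) (Fin n) ℝ) {k : ℕ} (hk1 : 1 ≤ k)
    (hkm : k ≤ m) (hkn : k ≤ n) :
    ∃ (R : Fin k → Finset (Fin m)) (Cc : Fin k → Finset (Fin n)),
      IsProperPartition R ∧ IsProperPartition Cc ∧ discPart C R Cc = disck C k := by
  set S := {t : ℝ | ∃ (R : Fin k → Finset (Fin m)) (Cc : Fin k → Finset (Fin n)),
    IsProperPartition R ∧ IsProperPartition Cc ∧ t = discPart C R Cc}
  have hfin : S.Finite := by
    refine (Set.finite_range fun p : (Fin k → Finset (Fin m)) × (Fin k → Finset (Fin n)) =>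
      discPart C p.1 p.2).subset ?_
    rintro t ⟨R, Cc, -, -, rfl⟩
    exact ⟨(R, Cc), rfl⟩
  obtain ⟨R, hR⟩ := exists_isProperPartition hk1 hkm
  obtain ⟨Cc, hCc⟩ := exists_isProperPartition hk1 hkn
  have hne : S.Nonempty := ⟨_, R, Cc, hR, hCc, rfl⟩
  obtain ⟨R, Cc, hR, hCc, h⟩ := hne.csInf_mem hfin
  exact ⟨R, Cc, hR, hCc, h.symm⟩

lemma le_discPart {k : ℕ} (C : Matrix (Fin m) (Fin n) ℝ) (R : Fin k → Finset (Fin m))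
    (Cc : Fin k → Finset (Fin n)) {a b : Fin k} {X : Finset (Fin m)} {Y : Finset (Fin n)}
    (hX : X ⊆ R a) (hY : Y ⊆ Cc b) :
    |cut C X Y - rho C (R a) (Cc b) * volRow C X * volCol C Y| /
      Real.sqrt (volRow C X * volCol C Y) ≤ discPart C R Cc := by
  refine le_csSup (Set.Finite.bddAbove ?_) ⟨a, b, X, Y, hX, hY, rfl⟩
  refine (Set.finite_range fun p : Fin k × Fin k × Finset (Fin m) × Finset (Fin n) =>
    |cut C p.2.2.1 p.2.2.2 - rho C (R p.1) (Cc p.2.1) * volRow C p.2.2.1 * volCol C p.2.2.2| /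
      Real.sqrt (volRow C p.2.2.1 * volCol C p.2.2.2)).subset ?_
  rintro t ⟨a, b, X, Y, -, -, rfl⟩
  exact ⟨(a, b, X, Y), rfl⟩

lemma apply_eq_of_discPart_eq_zero {k : ℕ} {C : Matrix (Fin m) (Fin n) ℝ}
    (hnonneg : ∀ i j, 0 ≤ C i j) {R : Fin k → Finset (Fin m)} {Cc : Fin k → Finset (Fin n)}
    (hdisc : discPart C R Cc = 0) {a b : Fin k} {i : Fin m} {j : Fin n}
    (hi : i ∈ R a) (hj : j ∈ Cc b) :
    C i j = rowSum C i * (rho C (R a) (Cc b) * colSum C j) := by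
  have hrow : 0 ≤ rowSum C i := Finset.sum_nonneg fun j _ => hnonneg i j
  have hcol : 0 ≤ colSum C j := Finset.sum_nonneg fun i _ => hnonneg i j
  -- At a zero margin the singleton term is the junk value `x / √0 = 0`; nonnegativity gives
  -- `c_ij = 0` instead.
  rcases hrow.eq_or_lt with hrow | hrow
  · rw [← hrow, zero_mul]
    exact (Finset.sum_eq_zero_iff_of_nonneg fun j _ => hnonneg i j).1 hrow.symm j
      (Finset.mem_univ j)
  rcases hcol.eq_or_lt with hcol | hcol
  · rw [← hcol, mul_zero, mul_zero]
    exact (Finset.sum_eq_zero_iff_of_nonneg fun i _ => hnonneg i j).1 hcol.symm i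
      (Finset.mem_univ i)
  have h := le_discPart C R Cc (Finset.singleton_subset_iff.2 hi) (Finset.singleton_subset_iff.2 hj)
  simp only [hdisc, cut, volRow, volCol, Finset.sum_singleton] at h
  rw [div_le_iff₀ (Real.sqrt_pos.2 (mul_pos hrow hcol)), zero_mul, abs_nonpos_iff,
    sub_eq_zero] at h
  rw [h]
  ring

lemma rank_le_of_discPart_eq_zero {k : ℕ} {C : Matrix (Fin m) (Fin n) ℝ}
    (hnonneg : ∀ i j, 0 ≤ C i j) {R : Fin k → Finset (Fin m)} {Cc : Fin k → Finset (Fin n)}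
    (hR : ∀ i, ∃ a, i ∈ R a) (hCc : ∀ j, ∃ b, j ∈ Cc b) (hdisc : discPart C R Cc = 0) :
    C.rank ≤ k := by
  choose a ha using hR
  choose b hb using hCc
  simpa using Matrix.rank_le_card_of_apply_eq_mul a (rowSum C)
    (Matrix.of fun c j => rho C (R c) (Cc (b j)) * colSum C j)
    fun i j => apply_eq_of_discPart_eq_zero hnonneg hdisc (ha i) (hb j)

theorem zero_discrepancy_implies_zero_singular_value_general
    (C : Matrix (Fin m) (Fin n) ℝ)
    (hnonneg : ∀ i j, 0 ≤ C i j)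
    (k : ℕ) (hk1 : 1 ≤ k)
    (hdisc : disck C k = 0) :
    sval (Cnor C) k = 0 := by
  refine sval_eq_zero_of_rank_le _ ((rank_Cnor_le C).trans ?_)
  by_cases hkmn : k ≤ m ∧ k ≤ n
  · obtain ⟨R, Cc, hR, hCc, hRC⟩ := exists_discPart_eq_disck C hk1 hkmn.1 hkmn.2
    exact rank_le_of_discPart_eq_zero hnonneg hR.2.2 hCc.2.2 (hRC.trans hdisc)
  · rcases not_and_or.1 hkmn with hkm | hkn
    · exact (C.rank_le_card_height.trans_eq (Fintype.card_fin m)).trans (by omega)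
    · exact (C.rank_le_card_width.trans_eq (Fintype.card_fin n)).trans (by omega)

/-- For every non-decomposable contingency table `C` and `1 ≤ k ≤ rk C`:
if `disc_k(C) = 0` then `s_k = 0`, where `s_k` is the `k`-th largest nontrivial
singular value of the normalized table `C_nor`. -/
theorem zero_discrepancy_implies_zero_singular_value
    (C : Matrix (Fin m) (Fin n) ℝ)
    (hnonneg : ∀ i j, 0 ≤ C i j)
    (hsum : ∑ i, ∑ j, C i j = 1)
    (hirr : if m ≤ n then MatIrreducible (C * Cᵀ) else MatIrreducible (Cᵀ * C))
    (k : ℕ) (hk1 : 1 ≤ k) (hk2 : k ≤ C.rank)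
    (hdisc : disck C k = 0) :
    sval (Cnor C) k = 0 :=
  zero_discrepancy_implies_zero_singular_value_general C hnonneg k hk1 hdisc

end Stmt14
end

section
/- Let x ∈ ℂⁿ with ‖x‖ = 1 and let D be an n×n diagonal matrix with positive diagonal entries d_1,…,d_n. Set f = ‖D^{-1}x‖, d = max_i d_i, and ε = 1/(3fd). Then ε ≤ 1/3 (since fd ≥ 1), and there exists a step-vector z ∈ ℂⁿ taking at most ⌈8π/ε⌉·⌈(4/ε)·log(2n/ε)⌉ distinct coordinate values such that ‖x − Dz‖ ≤ 1/3 and ‖Dz‖ ≤ 1. -/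
open scoped BigOperators
open Classical

namespace Stmt15

/-- The Euclidean norm of a complex vector. -/
noncomputable def enormC {N : ℕ} (v : Fin N → ℂ) : ℝ :=
  Real.sqrt (∑ i, ‖v i‖ ^ 2)

/-!
With `w = D⁻¹x` one has `‖w‖ = f` and `1 = ‖x‖ ≤ d f`, whence `ε ≤ 1/3`. It suffices to
approximate `w` by a step vector `y` with `‖yᵢ‖ ≤ ‖wᵢ‖` and `‖w - y‖ ≤ ε ‖w‖` and to take `z = y`:
then `‖x - Dz‖ ≤ d ε f = 1/3` and `‖Dz‖ ≤ ‖x‖ = 1`.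

The step vector rounds each coordinate to a polar grid: the radii `δ (1 + ε/3)^k`, `k < M`,
with `δ = ε‖w‖/(2n)` and `M = ⌈(4/ε) log(2n/ε)⌉`, reach `‖w‖` because `log (1 + ε/3) ≥ ε/4`;
there are `Q = ⌈8π/ε⌉ - 1` equally spaced angles, so `2π/Q ≤ ε/3`. Coordinates of modulus at
most `δ` go to `0` (error `≤ δ`); the others are rounded down in modulus (relative error
`≤ ε/3`) and to a grid angle within `2π/Q` (relative error `≤ 2π/Q`). Summing squares,
`‖w - y‖² ≤ ((2/3)² + 1/(4n)) ε² ‖w‖²`. The grid has `MQ + 1 ≤ M ⌈8π/ε⌉` points.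
-/

open Real

section EuclideanNorm

variable {N : ℕ}

lemma enormC_nonneg (v : Fin N → ℂ) : 0 ≤ enormC v := Real.sqrt_nonneg _

lemma enormC_sq (v : Fin N → ℂ) : enormC v ^ 2 = ∑ i, ‖v i‖ ^ 2 :=
  Real.sq_sqrt (by positivity)

lemma enormC_le_of_sum_sq_le {v : Fin N → ℂ} {c : ℝ} (hc : 0 ≤ c)
    (h : ∑ i, ‖v i‖ ^ 2 ≤ c ^ 2) : enormC v ≤ c :=
  Real.sqrt_le_iff.2 ⟨hc, h⟩

lemma norm_le_enormC (v : Fin N → ℂ) (i : Fin N) : ‖v i‖ ≤ enormC v :=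
  Real.le_sqrt_of_sq_le (Finset.single_le_sum (fun j _ => sq_nonneg ‖v j‖) (Finset.mem_univ i))

lemma enormC_le_mul_of_norm_le {u v : Fin N → ℂ} {c : ℝ} (hc : 0 ≤ c)
    (h : ∀ i, ‖u i‖ ≤ c * ‖v i‖) : enormC u ≤ c * enormC v := by
  refine enormC_le_of_sum_sq_le (mul_nonneg hc (enormC_nonneg v)) ?_
  rw [mul_pow, enormC_sq, Finset.mul_sum]
  gcongr with i
  rw [← mul_pow]
  exact pow_le_pow_left₀ (norm_nonneg _) (h i) 2

end EuclideanNorm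

section PolarGrid

open Complex

lemma exists_pow_le_le_pow_succ {δ ρ a : ℝ} {M : ℕ} (hδ : 0 < δ) (hρ : 1 < ρ) (hlo : δ < a)
    (hhi : a ≤ δ * ρ ^ M) : ∃ k < M, δ * ρ ^ k ≤ a ∧ a ≤ δ * ρ ^ (k + 1) := by
  obtain ⟨k, hk, hk'⟩ := exists_nat_pow_near ((one_le_div hδ).2 hlo.le) hρ
  rw [le_div_iff₀' hδ] at hk
  rw [div_lt_iff₀' hδ] at hk'
  by_cases hkM : k < M
  · exact ⟨k, hkM, hk, hk'.le⟩
  · have hM : M ≠ 0 := by rintro rfl; simp at hhi; linarith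
    refine ⟨M - 1, by omega, ?_, by rwa [Nat.sub_add_cancel (by omega)]⟩
    calc δ * ρ ^ (M - 1) ≤ δ * ρ ^ k := by gcongr; exacts [hρ.le, by omega]
      _ ≤ a := hk

lemma exists_angle_near {θ : ℝ} (hθ : -π < θ) (hθ' : θ ≤ π) {Q : ℕ} (hQ : 0 < Q) :
    ∃ j < Q, |θ - (π - 2 * π * j / Q)| ≤ 2 * π / Q := by
  have hQ' : (0 : ℝ) < Q := by exact_mod_cast hQ
  set t := (π - θ) * Q / (2 * π)
  have ht : 0 ≤ t := by positivity
  have htQ : t < Q := by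
    rw [div_lt_iff₀ (by positivity)]
    nlinarith [pi_pos]
  refine ⟨⌊t⌋₊, (Nat.floor_lt ht).2 htQ, ?_⟩
  have hdist : θ - (π - 2 * π * ⌊t⌋₊ / Q) = - (2 * π / Q * (t - ⌊t⌋₊)) := by
    simp only [t]; field_simp; ring
  rw [hdist, abs_neg, abs_of_nonneg (by have := Nat.floor_le ht; positivity)]
  have := Nat.lt_floor_add_one t
  calc 2 * π / Q * (t - ⌊t⌋₊) ≤ 2 * π / Q * 1 := by gcongr; linarith
    _ = 2 * π / Q := mul_one _

lemma norm_exp_mul_I_sub_exp_mul_I_le (θ φ : ℝ) :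
    ‖exp (θ * I) - exp (φ * I)‖ ≤ |θ - φ| := by
  have : exp (θ * I) - exp (φ * I) = exp (φ * I) * (exp (I * ↑(θ - φ)) - 1) := by
    rw [mul_sub, mul_one, ← Complex.exp_add]; push_cast; ring_nf
  rw [this, norm_mul, norm_exp_ofReal_mul_I, one_mul, ← Real.norm_eq_abs]
  exact norm_exp_I_mul_ofReal_sub_one_le

-- Angles run down from `π`, so that rounding `arg w ∈ (-π, π]` with a floor gives `j < Q`.
noncomputable def polarGrid (δ ρ : ℝ) (M Q : ℕ) : Finset ℂ :=
  insert 0 ((Finset.range M ×ˢ Finset.range Q).image fun p =>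
    ((δ * ρ ^ p.1 : ℝ) : ℂ) * exp (((π - 2 * π * p.2 / Q : ℝ) : ℂ) * I))

lemma card_polarGrid_le (δ ρ : ℝ) (M Q : ℕ) : (polarGrid δ ρ M Q).card ≤ M * Q + 1 :=
  calc (polarGrid δ ρ M Q).card ≤ _ + 1 := Finset.card_insert_le _ _
    _ ≤ (Finset.range M ×ˢ Finset.range Q).card + 1 := by gcongr; exact Finset.card_image_le
    _ = M * Q + 1 := by simp

lemma exists_mem_polarGrid_near {δ ρ : ℝ} {M Q : ℕ} (hδ : 0 ≤ δ) (hρ : 1 < ρ) (hQ : 0 < Q)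
    {w : ℂ} (hw : ‖w‖ ≤ δ * ρ ^ M) :
    ∃ c ∈ polarGrid δ ρ M Q, ‖c‖ ≤ ‖w‖ ∧ ‖w - c‖ ≤ max ((ρ - 1 + 2 * π / Q) * ‖w‖) δ := by
  by_cases hsmall : ‖w‖ ≤ δ
  · exact ⟨0, Finset.mem_insert_self _ _, by simp, by simpa using Or.inr hsmall⟩
  push Not at hsmall
  have hδ' : 0 < δ := hδ.lt_of_ne (by rintro rfl; simp_all)
  obtain ⟨k, hk, hrw, hwr⟩ := exists_pow_le_le_pow_succ hδ' hρ hsmall hw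
  obtain ⟨j, hj, hθφ⟩ := exists_angle_near (neg_pi_lt_arg w) (arg_le_pi w) hQ
  set r := δ * ρ ^ k
  set φ := π - 2 * π * j / Q
  have hr : 0 ≤ r := by positivity
  have hnorm : ‖((r : ℝ) : ℂ) * exp ((φ : ℂ) * I)‖ = r := by
    rw [norm_mul, norm_exp_ofReal_mul_I, mul_one, norm_real, Real.norm_of_nonneg hr]
  refine ⟨_, Finset.mem_insert_of_mem (Finset.mem_image.2 ⟨(k, j), by simp [hk, hj], rfl⟩),
    hnorm ▸ hrw, le_max_of_le_left ?_⟩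
  have hsplit : w - r * exp (φ * I) =
      ((‖w‖ - r : ℝ) : ℂ) * exp (arg w * I) + r * (exp (arg w * I) - exp (φ * I)) := by
    conv_lhs => rw [← norm_mul_exp_arg_mul_I w]
    push_cast; ring
  have hwr' : ‖w‖ - r ≤ (ρ - 1) * r := by rw [pow_succ, ← mul_assoc] at hwr; linarith
  calc ‖w - r * exp (φ * I)‖
      ≤ (‖w‖ - r) + r * ‖exp (arg w * I) - exp (φ * I)‖ := by
        rw [hsplit]
        refine (norm_add_le _ _).trans_eq ?_
        rw [norm_mul, norm_mul, norm_exp_ofReal_mul_I, norm_real, norm_real,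
          Real.norm_of_nonneg (by linarith), Real.norm_of_nonneg hr, mul_one]
    _ ≤ (ρ - 1) * r + r * (2 * π / Q) := by
        gcongr
        exact (norm_exp_mul_I_sub_exp_mul_I_le _ _).trans hθφ
    _ ≤ (ρ - 1 + 2 * π / Q) * ‖w‖ := by
        rw [← mul_comm r, ← mul_add, mul_comm]
        gcongr

end PolarGrid

lemma le_one_add_pow_ceil_log {ε x : ℝ} (hε0 : 0 < ε) (hε1 : ε ≤ 1) (hx : 1 ≤ x) :
    x ≤ (1 + ε / 3) ^ ⌈4 / ε * log x⌉₊ := by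
  have hlogρ : ε / 4 ≤ log (1 + ε / 3) := by
    calc ε / 4 ≤ ε / (3 + ε) := div_le_div_of_nonneg_left hε0.le (by positivity) (by linarith)
      _ = 1 - (1 + ε / 3)⁻¹ := by field_simp; ring
      _ ≤ _ := one_sub_inv_le_log_of_pos (by positivity)
  rw [← log_le_log_iff (by positivity) (by positivity), log_pow]
  have hM := Nat.le_ceil (4 / ε * log x)
  have hlogx := log_nonneg hx
  calc log x = 4 / ε * log x * (ε / 4) := by field_simp
    _ ≤ _ := by gcongr

lemma zero_lt_ceil_sub_one_and_two_pi_div_le {ε : ℝ} (hε0 : 0 < ε) (hε1 : ε ≤ 1) :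
    0 < ⌈8 * π / ε⌉₊ - 1 ∧ 2 * π / (⌈8 * π / ε⌉₊ - 1 : ℕ) ≤ ε / 3 := by
  have hP := Nat.le_ceil (8 * π / ε)
  have h6 : 6 * π / ε + 1 ≤ 8 * π / ε := by
    rw [div_add_one hε0.ne', div_le_div_iff_of_pos_right hε0]; nlinarith [pi_gt_three]
  have hQ : 6 * π / ε ≤ ((⌈8 * π / ε⌉₊ - 1 : ℕ) : ℝ) := by
    have hP1 : (1 : ℝ) ≤ ⌈8 * π / ε⌉₊ := by linarith [(by positivity : 0 < 6 * π / ε)]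
    rw [Nat.cast_sub (by exact_mod_cast hP1)]
    push_cast; linarith
  have hQ0 : (0 : ℝ) < ((⌈8 * π / ε⌉₊ - 1 : ℕ) : ℝ) := (by positivity : 0 < 6 * π / ε).trans_le hQ
  refine ⟨by exact_mod_cast hQ0, ?_⟩
  rw [div_le_iff₀ hQ0]
  calc 2 * π = ε / 3 * (6 * π / ε) := by field_simp; ring
    _ ≤ _ := by gcongr

theorem exists_step_vector_approx {n : ℕ} (v : Fin n → ℂ) {ε : ℝ} (hε0 : 0 < ε) (hε1 : ε ≤ 1) :
    ∃ y : Fin n → ℂ,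
      (Finset.univ.image y).card ≤ ⌈8 * π / ε⌉₊ * ⌈4 / ε * log (2 * n / ε)⌉₊ ∧
      (∀ i, ‖y i‖ ≤ ‖v i‖) ∧ enormC (fun i => v i - y i) ≤ ε * enormC v := by
  rcases n.eq_zero_or_pos with rfl | hn
  · exact ⟨v, by simp, fun _ => le_rfl, by simp [enormC]⟩
  have hn' : (1 : ℝ) ≤ n := by exact_mod_cast hn
  set M := ⌈4 / ε * log (2 * n / ε)⌉₊
  set Q := ⌈8 * π / ε⌉₊ - 1
  obtain ⟨hQ, hangle⟩ := zero_lt_ceil_sub_one_and_two_pi_div_le hε0 hε1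
  set E := enormC v
  set δ := ε * E / (2 * n)
  have hδ : 0 ≤ δ := by have := enormC_nonneg v; positivity
  have hradius : 2 * n / ε ≤ (1 + ε / 3) ^ M :=
    le_one_add_pow_ceil_log hε0 hε1 (by rw [le_div_iff₀ hε0]; linarith)
  have hcover : ∀ i, ‖v i‖ ≤ δ * (1 + ε / 3) ^ M := fun i =>
    calc ‖v i‖ ≤ E := norm_le_enormC v i
      _ = δ * (2 * n / ε) := by simp only [δ]; field_simp
      _ ≤ _ := by gcongr
  choose y hyG hyv hyerr using fun i =>
    exists_mem_polarGrid_near hδ (by linarith : 1 < 1 + ε / 3) hQ (hcover i)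
  refine ⟨y, ?_, hyv, enormC_le_of_sum_sq_le (mul_nonneg hε0.le (enormC_nonneg v)) ?_⟩
  · have hM : 0 < M := by
      by_contra! h
      rw [Nat.le_zero.1 h, pow_zero, div_le_one hε0] at hradius
      linarith
    calc (Finset.univ.image y).card ≤ (polarGrid δ (1 + ε / 3) M Q).card :=
          Finset.card_le_card (by simpa [Finset.image_subset_iff] using hyG)
      _ ≤ M * Q + 1 := card_polarGrid_le _ _ _ _
      _ ≤ M * Q + M := by omega
      _ = (Q + 1) * M := by ring
      _ = ⌈8 * π / ε⌉₊ * M := by rw [Nat.sub_add_cancel (by omega)]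
  · have hterm : ∀ i, ‖v i - y i‖ ^ 2 ≤ (2 * ε / 3) ^ 2 * ‖v i‖ ^ 2 + δ ^ 2 := fun i => by
      have hrel : (1 + ε / 3 - 1 + 2 * π / Q) * ‖v i‖ ≤ 2 * ε / 3 * ‖v i‖ := by
        gcongr; linarith
      have := (hyerr i).trans (max_le_max_right δ hrel)
      rw [← mul_pow]
      rcases le_total (2 * ε / 3 * ‖v i‖) δ with h | h
      · nlinarith [norm_nonneg (v i - y i), max_eq_right h]
      · nlinarith [norm_nonneg (v i - y i), max_eq_left h]
    calc ∑ i, ‖v i - y i‖ ^ 2 ≤ ∑ i, ((2 * ε / 3) ^ 2 * ‖v i‖ ^ 2 + δ ^ 2) :=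
          Finset.sum_le_sum fun i _ => hterm i
      _ = (4 / 9 + 1 / (4 * n)) * (ε * E) ^ 2 := by
          rw [Finset.sum_add_distrib, ← Finset.mul_sum, ← enormC_sq]
          simp only [δ, Finset.sum_const, Finset.card_univ, Fintype.card_fin, nsmul_eq_mul]
          field_simp; ring
      _ ≤ (ε * E) ^ 2 := by
          have : 1 / (4 * n) ≤ (1 / 4 : ℝ) := by gcongr; linarith
          nlinarith [sq_nonneg (ε * E)]

/-- From the Bollobás–Nikiforov approximation lemma: for a unit vector `x ∈ ℂⁿ`
and a diagonal matrix `D` with positive diagonal entries `d_1,…,d_n`, setting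
`f = ‖D⁻¹x‖`, `d = max_i d_i` and `ε = 1/(3fd)`, one has `ε ≤ 1/3` (since
`fd ≥ 1`), and there is a step-vector `z ∈ ℂⁿ` taking at most
`⌈8π/ε⌉·⌈(4/ε)·log(2n/ε)⌉` distinct coordinate values such that
`‖x - Dz‖ ≤ 1/3` and `‖Dz‖ ≤ 1`. -/
theorem step_vector_from_BN {n : ℕ}
    (x : Fin n → ℂ) (hx : enormC x = 1)
    (dd : Fin n → ℝ) (hdd : ∀ i, 0 < dd i)
    (f dmax ε : ℝ)
    (hf : f = enormC (fun i => ((dd i : ℂ))⁻¹ * x i))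
    (hdmax : IsGreatest (Set.range dd) dmax)
    (hε : ε = 1 / (3 * f * dmax)) :
    ε ≤ 1 / 3 ∧
    ∃ z : Fin n → ℂ,
      (Finset.univ.image z).card ≤
        ⌈8 * Real.pi / ε⌉₊ * ⌈4 / ε * Real.log (2 * n / ε)⌉₊ ∧
      enormC (fun i => x i - (dd i : ℂ) * z i) ≤ 1 / 3 ∧
      enormC (fun i => (dd i : ℂ) * z i) ≤ 1 := by
  set w : Fin n → ℂ := fun i => ((dd i : ℂ))⁻¹ * x i
  have hxw : ∀ i, x i = dd i * w i := fun i => by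
    simp only [w]; rw [mul_inv_cancel_left₀ (by exact_mod_cast (hdd i).ne')]
  have hnorm_mul : ∀ i (c : ℂ), ‖(dd i : ℂ) * c‖ = dd i * ‖c‖ := fun i c => by
    rw [norm_mul, Complex.norm_real, Real.norm_of_nonneg (hdd i).le]
  have hle : ∀ i, dd i ≤ dmax := fun i => hdmax.2 (Set.mem_range_self i)
  obtain ⟨i₀, hi₀⟩ := hdmax.1
  have hdmax0 : 0 < dmax := hi₀ ▸ hdd i₀
  have hfd : 1 ≤ dmax * f := hx ▸ hf ▸ enormC_le_mul_of_norm_le hdmax0.le fun i => by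
    rw [hxw, hnorm_mul]; gcongr; exact hle i
  have hf0 : 0 < f := pos_of_mul_pos_right (by linarith) hdmax0.le
  have hε0 : 0 < ε := by rw [hε]; positivity
  have hεfd : ε * (dmax * f) = 1 / 3 := by rw [hε]; field_simp
  have hε3 : ε ≤ 1 / 3 := by nlinarith
  obtain ⟨y, hcard, hyw, herr⟩ := exists_step_vector_approx w hε0 (by linarith)
  refine ⟨hε3, y, hcard, ?_, ?_⟩
  · calc enormC (fun i => x i - dd i * y i) ≤ dmax * enormC (fun i => w i - y i) :=
          enormC_le_mul_of_norm_le hdmax0.le fun i => by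
            rw [hxw, ← mul_sub, hnorm_mul]; gcongr; exact hle i
      _ ≤ dmax * (ε * f) := by rw [hf]; gcongr
      _ = 1 / 3 := by rw [← hεfd]; ring
  · calc enormC (fun i => (dd i : ℂ) * y i) ≤ 1 * enormC x :=
          enormC_le_mul_of_norm_le zero_le_one fun i => by
            rw [one_mul, hnorm_mul, hxw, hnorm_mul]
            exact mul_le_mul_of_nonneg_left (hyw i) (hdd i).le
      _ = 1 := by rw [hx, one_mul]

end Stmt15
end
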